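/- arXiv:2602.03746 — 7 statements merged into one kernel-verified Lean document; each statement's English description precedes it below -/
import Mathlib

section
/- There exist a finite alphabet A, an infinite word x : ℕ → A, and a real number c > 1 such that x is factor-balanced and its factor complexity satisfies p_x(n) ≥ c^n for all n ≥ 1 (in particular, x has exponential-growth factor complexity). -/
open scoped Classical

section Core

variable {A : Type*} {B : Type*}

/-- `w` occurs at position `i` of the infinite word `x`. -/
def OccursAt (x : ℕ → A) (w : List A) (i : ℕ) : Prop :=
  w = (List.range w.length).map fun j => x (i + j)

/-- `w` is a factor of the infinite word `x`. -/
def IsFactor (x : ℕ → A) (w : List A) : Prop := ∃ i, OccursAt x w i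

/-- The number of (possibly overlapping) occurrences of `w` in the finite word `u`,
i.e. `|u|_w`. -/
noncomputable def countOccs (u w : List A) : ℕ :=
  ((Finset.range (u.length + 1)).filter fun i => w <+: u.drop i).card

/-- The finite word `w` is `C`-balanced in the infinite word `x`. -/
def BalancedIn (C : ℝ) (w : List A) (x : ℕ → A) : Prop :=
  ∀ u v : List A, IsFactor x u → IsFactor x v → u.length = v.length →
    |(countOccs u w : ℝ) - (countOccs v w : ℝ)| ≤ C

/-- Every finite word is `C_w`-balanced in `x` for some constant `C_w > 0`. -/
def FactorBalanced (x : ℕ → A) : Prop :=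
  ∀ w : List A, ∃ C : ℝ, 0 < C ∧ BalancedIn C w x

/-- There is a single constant `C > 0` such that every finite word is `C`-balanced in `x`. -/
def UniformlyFactorBalanced (x : ℕ → A) : Prop :=
  ∃ C : ℝ, 0 < C ∧ ∀ w : List A, BalancedIn C w x

/-- Every letter is `C`-balanced in `x`. -/
def LetterBalanced (C : ℝ) (x : ℕ → A) : Prop :=
  ∀ a : A, BalancedIn C [a] x

/-- `x` is `P`-power-free: no factor of `x` is a `P`-th power of a nonempty word. -/
def PowerFree (P : ℕ) (x : ℕ → A) : Prop :=
  ∀ v : List A, v ≠ [] → ¬ IsFactor x (List.flatten (List.replicate P v))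

/-- The length-`n` prefix of the infinite word `x`. -/
def wordPrefix (x : ℕ → A) (n : ℕ) : List A := (List.range n).map x

/-- The extension of a substitution to finite words. -/
def substWord (τ : A → List B) (w : List A) : List B := (w.map τ).flatten

/-- The word `w` has (prefix) frequency `μ` in `x`. -/
def HasFreq (x : ℕ → A) (w : List A) (μ : ℝ) : Prop :=
  Filter.Tendsto (fun n => (countOccs (wordPrefix x n) w : ℝ) / n)
    Filter.atTop (nhds μ)

/-- `τ` is `k`-decisive in `x` with witness map `r` (each `r a` of length `k ≥ 1`,
and `τ b` starts with `r a` whenever `ab` is a factor of `x`). -/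
def DecisiveWith (τ : A → List B) (x : ℕ → A) (r : A → List B) (k : ℕ) : Prop :=
  1 ≤ k ∧ (∀ a, (r a).length = k) ∧
    ∀ a b : A, IsFactor x [a, b] → r a <+: τ b

/-- `τ` is `k`-decisive in `x`. -/
def Decisive (τ : A → List B) (x : ℕ → A) (k : ℕ) : Prop :=
  ∃ r : A → List B, DecisiveWith τ x r k

/-- The image of the infinite word `x` under the substitution `τ`: when the images of
prefixes of `x` have unbounded length, `substInf τ x` is the infinite word `τ(x)`. -/
noncomputable def substInf [Nonempty B] (τ : A → List B) (x : ℕ → A) (j : ℕ) : B :=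
  if h : ∃ n, j < (substWord τ (wordPrefix x n)).length
  then (substWord τ (wordPrefix x (Nat.find h))).get ⟨j, Nat.find_spec h⟩
  else Classical.arbitrary B

/-- Iterates of a substitution: `substIter τ n a = τ^n(a)` as a finite word. -/
def substIter (τ : A → List A) : ℕ → A → List A
  | 0, a => [a]
  | n+1, a => substWord (substIter τ n) (τ a)

/-- `τ` is prolongable on the letter `a`. -/
def Prolongable (τ : A → List A) (a : A) : Prop :=
  (τ a).head? = some a ∧ (∀ b, τ b ≠ []) ∧
    Filter.Tendsto (fun n => (substIter τ n a).length) Filter.atTop Filter.atTop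

/-- The fixed point `τ^ω(a)` of a substitution prolongable on `a`:
the limit of the prefix chain `τ^n(a)`. -/
noncomputable def fixedPoint (τ : A → List A) (a : A) (j : ℕ) : A :=
  if h : ∃ n, j < (substIter τ n a).length
  then (substIter τ (Nat.find h) a).get ⟨j, Nat.find_spec h⟩
  else a

/-- The factor complexity of `x`: the number of distinct length-`n` factors. -/
noncomputable def complexity (x : ℕ → A) (n : ℕ) : ℕ :=
  Set.ncard {w : List A | w.length = n ∧ IsFactor x w}

/-- Every factor of `x` occurs infinitely often in `x`. -/
def Recurrent (x : ℕ → A) : Prop :=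
  ∀ w : List A, IsFactor x w → ∀ N : ℕ, ∃ i, N ≤ i ∧ OccursAt x w i

/-- For every factor `w` of `x` there is `k` such that `w` occurs in
every length-`k` factor of `x`. -/
def UniformlyRecurrent (x : ℕ → A) : Prop :=
  ∀ w : List A, IsFactor x w → ∃ k : ℕ, ∀ v : List A, IsFactor x v →
    v.length = k → 1 ≤ countOccs v w

end Core


namespace BalExp

abbrev Al := Fin 32

def step (p : List (List Al) × List Al) : List (List Al) × List Al :=
  (p.1.permutations.map (fun l => p.2 ++ l.flatten ++ p.2), p.2 ++ p.1.flatten ++ p.2)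

def P : ℕ → List (List Al) × List Al
  | 0 => ((List.finRange 32).map (fun b => [b]), [0])
  | (k+1) => step (P k)

def T (k : ℕ) : List (List Al) := (P k).1
def a (k : ℕ) : List Al := (P k).2
def L (k : ℕ) : ℕ := (a k).length
def N (k : ℕ) : ℕ := (T k).length

lemma T_succ (k : ℕ) : T (k+1) = (T k).permutations.map (fun l => a k ++ l.flatten ++ a k) := rfl
lemma a_succ (k : ℕ) : a (k+1) = a k ++ (T k).flatten ++ a k := rfl
lemma T_zero : T 0 = (List.finRange 32).map (fun b => [b]) := rfl
lemma a_zero : a 0 = [0] := rfl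
lemma L_zero : L 0 = 1 := rfl
lemma N_zero : N 0 = 32 := rfl

lemma a_mem : ∀ k, a k ∈ T k
  | 0 => by
      rw [T_zero, a_zero]
      exact List.mem_map.2 ⟨0, List.mem_finRange _, rfl⟩
  | (k+1) => by
      rw [T_succ, a_succ]
      exact List.mem_map.2 ⟨T k, List.mem_permutations.2 (List.Perm.refl _), rfl⟩

lemma sum_map_len (l : List (List Al)) (c : ℕ) (h : ∀ u ∈ l, u.length = c) :
    (l.map List.length).sum = l.length * c := by
  induction l with
  | nil => simp
  | cons u t ih =>
      simp only [List.map_cons, List.sum_cons, List.length_cons]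
      rw [h u (by simp), ih (fun v hv => h v (by simp [hv]))]
      ring

lemma len_mem : ∀ k, ∀ u ∈ T k, u.length = L k := by
  intro k
  induction k with
  | zero =>
      intro u hu
      rw [T_zero] at hu
      obtain ⟨b, _, rfl⟩ := List.mem_map.1 hu
      rfl
  | succ k ih =>
      intro u hu
      rw [T_succ] at hu
      obtain ⟨l, hl, rfl⟩ := List.mem_map.1 hu
      have hperm : l.Perm (T k) := List.mem_permutations.1 hl
      have hlen : ∀ v ∈ l, v.length = L k := fun v hv => ih v (hperm.subset hv)
      have h1 : l.flatten.length = l.length * L k := by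
        rw [List.length_flatten, sum_map_len l (L k) hlen]
      have h2 : ((T k).flatten).length = (T k).length * L k := by
        rw [List.length_flatten, sum_map_len (T k) (L k) ih]
      have hA : (a (k+1)).length = (a k).length + (T k).length * L k + (a k).length := by
        rw [a_succ]; simp only [List.length_append, h2]
      have hL : L (k+1) = (a (k+1)).length := rfl
      rw [hL, hA]
      simp only [List.length_append, h1, hperm.length_eq]

lemma L_succ (k : ℕ) : L (k+1) = (N k + 2) * L k := by
  have h2 : ((T k).flatten).length = (T k).length * L k := by
    rw [List.length_flatten, sum_map_len (T k) (L k) (len_mem k)]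
  show (a (k+1)).length = (N k + 2) * L k
  rw [a_succ]
  simp only [List.length_append, h2]
  show (a k).length + (T k).length * L k + (a k).length = (N k + 2) * L k
  have : (a k).length = L k := rfl
  rw [this]
  have : (T k).length = N k := rfl
  rw [this]
  ring

lemma N_succ (k : ℕ) : N (k+1) = (N k).factorial := by
  show (T (k+1)).length = _
  rw [T_succ, List.length_map, List.length_permutations]
  rfl

lemma L_pos (k : ℕ) : 0 < L k := by
  induction k with
  | zero => exact Nat.one_pos
  | succ k ih => rw [L_succ]; positivity

lemma L_mono_succ (k : ℕ) : 2 * L k ≤ L (k+1) := by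
  rw [L_succ]; nlinarith [L_pos k]

lemma L_ge (k : ℕ) : k + 1 ≤ L k := by
  induction k with
  | zero => simp [L_zero]
  | succ k ih => have := L_mono_succ k; omega

lemma L_le_L {k j : ℕ} (h : k ≤ j) : L k ≤ L j := by
  induction j with
  | zero => simp_all
  | succ j ih =>
      rcases Nat.lt_or_ge k (j+1) with h'|h'
      · have := ih (by omega); have := L_mono_succ j; omega
      · have : k = j + 1 := by omega
        subst this
        first | exact le_refl _ | exact dvd_refl _ | exact List.prefix_refl _ | exact List.suffix_refl _

lemma L_dvd {k j : ℕ} (h : k ≤ j) : L k ∣ L j := by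
  induction j with
  | zero => simp_all
  | succ j ih =>
      rcases Nat.lt_or_ge k (j+1) with h'|h'
      · exact (ih (by omega)).trans ⟨N j + 2, by rw [L_succ]; ring⟩
      · have : k = j + 1 := by omega
        subst this
        first | exact le_refl _ | exact dvd_refl _ | exact List.prefix_refl _ | exact List.suffix_refl _

lemma L_pow_le (k d : ℕ) : 2 ^ d * L k ≤ L (k + d) := by
  induction d with
  | zero => simp
  | succ d ih =>
      have := L_mono_succ (k + d)
      calc 2 ^ (d+1) * L k = 2 * (2 ^ d * L k) := by ring
      _ ≤ 2 * L (k+d) := by omega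
      _ ≤ L (k+d+1) := this

lemma a_prefix_succ (k : ℕ) : a k <+: a (k+1) :=
  ⟨(T k).flatten ++ a k, by rw [a_succ]; simp⟩

lemma a_suffix_succ (k : ℕ) : a k <:+ a (k+1) :=
  ⟨a k ++ (T k).flatten, by rw [a_succ]⟩

lemma a_prefix_le {k j : ℕ} (h : k ≤ j) : a k <+: a j := by
  induction j with
  | zero => simp_all
  | succ j ih =>
      rcases Nat.lt_or_ge k (j+1) with h'|h'
      · exact (ih (by omega)).trans (a_prefix_succ j)
      · have : k = j + 1 := by omega
        subst this
        first | exact le_refl _ | exact dvd_refl _ | exact List.prefix_refl _ | exact List.suffix_refl _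

lemma a_suffix_le {k j : ℕ} (h : k ≤ j) : a k <:+ a j := by
  induction j with
  | zero => simp_all
  | succ j ih =>
      rcases Nat.lt_or_ge k (j+1) with h'|h'
      · exact (ih (by omega)).trans (a_suffix_succ j)
      · have : k = j + 1 := by omega
        subst this
        first | exact le_refl _ | exact dvd_refl _ | exact List.prefix_refl _ | exact List.suffix_refl _

lemma mem_T_prefix {k j : ℕ} (h : k < j) {u : List Al} (hu : u ∈ T j) : a k <+: u := by
  obtain ⟨j', rfl⟩ : ∃ j', j = j' + 1 := ⟨j - 1, by omega⟩
  rw [T_succ] at hu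
  obtain ⟨l, _, rfl⟩ := List.mem_map.1 hu
  exact (a_prefix_le (by omega : k ≤ j')).trans ⟨l.flatten ++ a j', by simp⟩

lemma mem_T_suffix {k j : ℕ} (h : k < j) {u : List Al} (hu : u ∈ T j) : a k <:+ u := by
  obtain ⟨j', rfl⟩ : ∃ j', j = j' + 1 := ⟨j - 1, by omega⟩
  rw [T_succ] at hu
  obtain ⟨l, _, rfl⟩ := List.mem_map.1 hu
  exact (a_suffix_le (by omega : k ≤ j')).trans ⟨a j' ++ l.flatten, by simp⟩

lemma flatten_inj_aux (c : ℕ) (hc : 0 < c) : ∀ l1 l2 : List (List Al),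
    (∀ u ∈ l1, u.length = c) → (∀ u ∈ l2, u.length = c) → l1.flatten = l2.flatten → l1 = l2 := by
  intro l1
  induction l1 with
  | nil =>
      intro l2 _ h2 h
      cases l2 with
      | nil => rfl
      | cons v t =>
          exfalso
          have hv : v.length = c := h2 v (by simp)
          have hl := congrArg List.length h
          simp only [List.flatten_nil, List.length_nil, List.flatten_cons, List.length_append] at hl
          omega
  | cons u t1 ih =>
      intro l2 h1 h2 h
      cases l2 with
      | nil =>
          exfalso
          have hu : u.length = c := h1 u (by simp)
          have hl := congrArg List.length h
          simp only [List.flatten_nil, List.length_nil, List.flatten_cons, List.length_append] at hl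
          omega
      | cons v t2 =>
          simp only [List.flatten_cons] at h
          have hlen : u.length = v.length := by
            rw [h1 u (by simp), h2 v (by simp)]
          obtain ⟨hu, ht⟩ := List.append_inj h hlen
          subst hu
          rw [ih t2 (fun w hw => h1 w (by simp [hw])) (fun w hw => h2 w (by simp [hw])) ht]

lemma T_nodup : ∀ k, (T k).Nodup := by
  intro k
  induction k with
  | zero =>
      rw [T_zero]
      refine List.Nodup.map ?_ (List.nodup_finRange 32)
      intro b1 b2 h
      simpa using h
  | succ k ih =>
      rw [T_succ]
      refine List.Nodup.map_on ?_ (List.nodup_permutations _ ih)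
      intro l1 h1 l2 h2 heq
      have h1' : l1.Perm (T k) := List.mem_permutations.1 h1
      have h2' : l2.Perm (T k) := List.mem_permutations.1 h2
      have : l1.flatten = l2.flatten := by
        have := heq
        rw [List.append_assoc, List.append_assoc] at this
        have := List.append_cancel_left this
        exact List.append_cancel_right this
      exact flatten_inj_aux (L k) (L_pos k) l1 l2
        (fun u hu => len_mem k u (h1'.subset hu))
        (fun u hu => len_mem k u (h2'.subset hu)) this

lemma N_ge (k : ℕ) : 32 ≤ N k := by
  induction k with
  | zero => simp [N_zero]
  | succ k ih =>
      rw [N_succ]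
      calc 32 ≤ N k := ih
      _ ≤ (N k).factorial := Nat.self_le_factorial _

end BalExp

-- Part B : the infinite word x and segments
namespace BalExp

noncomputable def xw : ℕ → Al := fun j => (a (j+1)).getD j 0

lemma getD_of_prefix {u v : List Al} (h : u <+: v) {j : ℕ} (hj : j < u.length) :
    v.getD j 0 = u.getD j 0 := by
  obtain ⟨t, rfl⟩ := h
  exact List.getD_append u t 0 j hj

lemma x_eq {k j : ℕ} (hj : j < L k) : xw j = (a k).getD j 0 := by
  rcases Nat.le_total (j+1) k with h|h
  · have h1 : a (j+1) <+: a k := a_prefix_le h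
    have hj1 : j < L (j+1) := by have := L_ge (j+1); omega
    rw [xw, getD_of_prefix h1 hj1]
  · have h1 : a k <+: a (j+1) := a_prefix_le h
    rw [xw, getD_of_prefix h1 hj]

noncomputable def seg (i n : ℕ) : List Al := (List.range n).map (fun j => xw (i + j))

lemma seg_length (i n : ℕ) : (seg i n).length = n := by simp [seg]

lemma seg_getElem (i n j : ℕ) (hj : j < n) :
    (seg i n)[j]'(by simpa [seg_length] using hj) = xw (i + j) := by
  simp [seg]

lemma occursAt_iff_seg {w : List Al} {i : ℕ} : OccursAt xw w i ↔ w = seg i w.length :=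
  Iff.rfl

lemma seg_append (i m n : ℕ) : seg i (m + n) = seg i m ++ seg (i + m) n := by
  apply List.ext_getElem
  · simp [seg_length]
  intro j h1 h2
  have hj : j < m + n := by simpa [seg_length] using h1
  rw [seg_getElem i (m+n) j hj]
  rcases Nat.lt_or_ge j m with h|h
  · rw [List.getElem_append_left (by simpa [seg_length] using h)]
    rw [seg_getElem i m j h]
  · rw [List.getElem_append_right (by simpa [seg_length] using h)]
    have hsl : (seg i m).length = m := seg_length i m
    simp only [hsl]
    rw [seg_getElem (i + m) n (j - m) (by omega)]
    congr 1
    omega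

lemma seg_drop (i n t : ℕ) : (seg i n).drop t = seg (i + t) (n - t) := by
  rcases Nat.le_total t n with h|h
  · have : n = t + (n - t) := by omega
    rw [this, seg_append]
    rw [List.drop_append_of_le_length (by simp [seg_length])]
    simp [List.drop_eq_nil_of_le, seg_length]
  · rw [List.drop_eq_nil_of_le (by simp [seg_length]; omega)]
    have : n - t = 0 := by omega
    rw [this]
    rfl

lemma seg_take (i n t : ℕ) (h : t ≤ n) : (seg i n).take t = seg i t := by
  have : n = t + (n - t) := by omega
  rw [this, seg_append]
  rw [List.take_append_of_le_length (by simp [seg_length])]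
  simp [List.take_of_length_le, seg_length]

lemma seg_zero_eq (k n : ℕ) (h : n ≤ L k) : seg 0 n = (a k).take n := by
  have hL : L k = (a k).length := rfl
  apply List.ext_getElem
  · simp only [seg_length, List.length_take]; omega
  · intro j h1 h2
    rw [seg_getElem 0 n j (by simpa [seg_length] using h1)]
    rw [List.getElem_take]
    have hj : j < L k := by simp [seg_length] at h1; omega
    have := x_eq hj
    rw [Nat.zero_add, this, List.getD_eq_getElem]

lemma seg_zero_L (k : ℕ) : seg 0 (L k) = a k := by
  rw [seg_zero_eq k (L k) (le_refl _)]
  exact List.take_of_length_le (Nat.le_refl _)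

lemma wordPrefix_eq_seg (n : ℕ) : wordPrefix xw n = seg 0 n := by
  unfold wordPrefix seg
  congr 1
  funext j
  rw [Nat.zero_add]

lemma seg_of_seg {i n : ℕ} {u : List Al} (h : seg i n = u) {t s : ℕ} (hts : t + s ≤ n) :
    seg (i + t) s = (u.drop t).take s := by
  rw [← h, seg_drop, seg_take _ _ _ (by omega)]

-- chunks of flatten
lemma flatten_chunk : ∀ (bs : List (List Al)) (c : ℕ), (∀ u ∈ bs, u.length = c) →
    ∀ i (hi : i < bs.length), (bs.flatten.drop (i * c)).take c = bs[i] := by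
  intro bs
  induction bs with
  | nil => intro c _ i hi; simp at hi
  | cons u t ih =>
      intro c hc i hi
      cases i with
      | zero =>
          simp only [Nat.zero_mul, List.drop_zero, List.flatten_cons]
          rw [List.take_append_of_le_length (by rw [hc u (by simp)])]
          rw [List.take_of_length_le (by rw [hc u (by simp)])]
          rfl
      | succ i =>
          have hlen : u.length = c := hc u (by simp)
          simp only [List.flatten_cons]
          have : (i+1) * c = u.length + i * c := by rw [hlen]; ring
          rw [this, List.drop_length_add_append, ih c (fun v hv => hc v (by simp [hv])) i (by simpa using hi)]
          rfl

lemma T_shape {k : ℕ} {B : List Al} (hB : B ∈ T (k+1)) :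
    ∃ l, l.Perm (T k) ∧ B = (a k :: (l ++ [a k])).flatten := by
  rw [T_succ] at hB
  obtain ⟨l, hl, rfl⟩ := List.mem_map.1 hB
  exact ⟨l, List.mem_permutations.1 hl, by simp⟩

lemma sub_block {k : ℕ} {B : List Al} (hB : B ∈ T (k+1)) {i : ℕ} (hi : i < N k + 2) :
    (B.drop (i * L k)).take (L k) ∈ T k := by
  obtain ⟨l, hperm, rfl⟩ := T_shape hB
  have hmem : ∀ u ∈ (a k :: (l ++ [a k])), u.length = L k := by
    intro u hu
    rcases List.mem_cons.1 hu with rfl|hu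
    · rfl
    rcases List.mem_append.1 hu with hu|hu
    · exact len_mem k u (hperm.subset hu)
    · simp at hu; subst hu; rfl
  have hlen : (a k :: (l ++ [a k])).length = N k + 2 := by
    simp [hperm.length_eq]
    rfl
  rw [flatten_chunk _ (L k) hmem i (by omega)]
  have : (a k :: (l ++ [a k]))[i]'(by omega) ∈ (a k :: (l ++ [a k])) := List.getElem_mem _
  rcases List.mem_cons.1 this with h|h
  · rw [h]; exact a_mem k
  rcases List.mem_append.1 h with h|h
  · exact hperm.subset h
  · simp at h; rw [h]; exact a_mem k

lemma seg_mem_descend : ∀ d k m, (m + 1) * L k ≤ L (k + d) → seg (m * L k) (L k) ∈ T k := by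
  intro d
  induction d with
  | zero =>
      intro k m h
      have h2 : (m + 1) * L k ≤ 1 * L k := by
        rw [Nat.one_mul]
        exact le_trans h (le_of_eq (by rw [Nat.add_zero]))
      have h3 := Nat.le_of_mul_le_mul_right h2 (L_pos k)
      have hm : m = 0 := by omega
      subst hm
      simpa [seg_zero_L k] using a_mem k
  | succ d ih =>
      intro k m h
      set m' := m / (N k + 2) with hm'
      set i := m % (N k + 2) with hi
      have hdecomp : m * L k = m' * L (k+1) + i * L k := by
        rw [L_succ]
        have : m = m' * (N k + 2) + i := by
          rw [Nat.mul_comm]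
          exact (Nat.div_add_mod m (N k + 2)).symm
        calc m * L k = (m' * (N k + 2) + i) * L k := by rw [← this]
        _ = m' * ((N k + 2) * L k) + i * L k := by ring
      have hstep : (m' + 1) * L (k+1) ≤ L (k + 1 + d) := by
        have hdvd : L (k+1) ∣ L (k+1+d) := L_dvd (by omega)
        have hlt : m' * L (k+1) < L (k+1+d) := by
          have h1 : m' * L (k+1) ≤ m * L k := by
            rw [L_succ]
            calc m' * ((N k + 2) * L k) = (m' * (N k + 2)) * L k := by ring
            _ ≤ m * L k := by
                have : m' * (N k + 2) ≤ m := Nat.div_mul_le_self m (N k + 2)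
                exact Nat.mul_le_mul_right _ this
          have h2 : m * L k < (m + 1) * L k := by
            have := L_pos k; nlinarith
          have h3 : L (k + (d+1)) = L (k+1+d) := by ring_nf
          omega
        obtain ⟨q, hq⟩ := hdvd
        rw [hq] at hlt ⊢
        have hp := L_pos (k+1)
        have : m' < q := by
          by_contra hc
          push_neg at hc
          nlinarith
        nlinarith
      have hB := ih (k+1) m' hstep
      have himod : i < N k + 2 := Nat.mod_lt _ (by omega)
      have hsub := sub_block hB himod
      have hseg : seg (m' * L (k+1) + i * L k) (L k) =
          ((seg (m' * L (k+1)) (L (k+1))).drop (i * L k)).take (L k) := by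
        apply seg_of_seg rfl
        rw [L_succ]
        calc i * L k + L k = (i + 1) * L k := by ring
        _ ≤ (N k + 2) * L k := Nat.mul_le_mul_right _ (by omega)
      rw [hdecomp, hseg]
      exact hsub

lemma seg_mem (k m : ℕ) : seg (m * L k) (L k) ∈ T k := by
  apply seg_mem_descend (m+1) k m
  calc (m+1) * L k ≤ 2 ^ (m+1) * L k := by
        have : m + 1 ≤ 2 ^ (m+1) := le_of_lt (Nat.lt_two_pow_self)
        exact Nat.mul_le_mul_right _ this
  _ ≤ L (k + (m+1)) := L_pow_le k (m+1)

end BalExp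

-- Part C : counting lemmas
namespace BalExp

lemma take_eq_of_prefix {u v : List Al} (h : u <+: v) {j : ℕ} (hj : j ≤ u.length) :
    v.take j = u.take j := by
  obtain ⟨t, rfl⟩ := h
  rw [List.take_append_of_le_length hj]

lemma prefix_append_iff_left {w u v : List Al} (h : w.length ≤ u.length) :
    w <+: u ++ v ↔ w <+: u := by
  rw [List.prefix_iff_eq_take, List.prefix_iff_eq_take,
    List.take_append_of_le_length h]

lemma prefix_append_congr {w z u v : List Al} (hu : u <+: v)
    (h : w.length ≤ z.length + u.length) : (w <+: z ++ v) ↔ (w <+: z ++ u) := by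
  rw [List.prefix_iff_eq_take, List.prefix_iff_eq_take]
  have : (z ++ v).take w.length = (z ++ u).take w.length := by
    rw [List.take_append, List.take_append]
    congr 1
    exact take_eq_of_prefix hu (by omega)
  rw [this]

lemma no_occ_of_short {w u : List Al} {i : ℕ} (hw : w ≠ []) (h : u.length < i + w.length) :
    ¬ (w <+: u.drop i) := by
  intro hpre
  have h1 := hpre.length_le
  have h2 : (u.drop i).length = u.length - i := by simp
  have : 0 < w.length := List.length_pos_iff.2 hw
  omega

lemma countOccs_eq_card_small {u w : List Al} (hw : w ≠ []) :
    countOccs u w =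
      ((Finset.range (u.length + 1 - w.length)).filter fun i => w <+: u.drop i).card := by
  unfold countOccs
  congr 1
  apply Finset.ext
  intro i
  simp only [Finset.mem_filter, Finset.mem_range]
  constructor
  · rintro ⟨hi, hp⟩
    refine ⟨?_, hp⟩
    by_contra hc
    push_neg at hc
    exact no_occ_of_short hw (by omega) hp
  · rintro ⟨hi, hp⟩
    have : 0 < w.length := List.length_pos_iff.2 hw
    exact ⟨by omega, hp⟩

/-- number of junction occurrences -/
noncomputable def sj (w : List Al) (k : ℕ) : ℕ :=
  ((Finset.Ico (L k + 1 - w.length) (L k)).filter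
    (fun o => w <+: (a k ++ a k).drop o)).card

lemma card_filter_shift {p q : ℕ → Prop} [DecidablePred p] [DecidablePred q]
    (d lo hi lo' hi' : ℕ) (hlo : lo' = lo + d) (hhi : hi' = hi + d)
    (hpq : ∀ o, lo ≤ o → o < hi → (p (o + d) ↔ q o)) :
    ((Finset.Ico lo' hi').filter p).card = ((Finset.Ico lo hi).filter q).card := by
  symm
  apply Finset.card_bij (fun o _ => o + d)
  · intro o ho
    simp only [Finset.mem_filter, Finset.mem_Ico] at ho ⊢
    refine ⟨by omega, ?_⟩
    exact (hpq o (by omega) (by omega)).2 ho.2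
  · intro o1 h1 o2 h2 h
    omega
  · intro z hz
    simp only [Finset.mem_filter, Finset.mem_Ico] at hz
    refine ⟨z - d, ?_, by omega⟩
    simp only [Finset.mem_filter, Finset.mem_Ico]
    have hzd : z - d + d = z := by omega
    refine ⟨by omega, ?_⟩
    exact (hpq (z - d) (by omega) (by omega)).1 (by rw [hzd]; exact hz.2)

lemma countOccs_append {w : List Al} {k : ℕ} (hw : w ≠ []) (hwk : w.length ≤ L k)
    {B C : List Al} (hB : a k <:+ B) (hC : a k <+: C) :
    countOccs (B ++ C) w = countOccs B w + countOccs C w + sj w k := by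
  set n := w.length with hn
  set m := L k with hm
  set b := B.length with hb
  set c := C.length with hc
  have ham : (a k).length = m := rfl
  have hn1 : 1 ≤ n := List.length_pos_iff.2 hw
  have hmb : m ≤ b := hB.length_le
  have hmc : m ≤ c := hC.length_le
  obtain ⟨B', hBeq⟩ := hB
  have hB' : B'.length = b - m := by
    have := congrArg List.length hBeq
    simp at this
    omega
  rw [countOccs_eq_card_small hw, countOccs_eq_card_small hw, countOccs_eq_card_small hw]
  have hlen : (B ++ C).length = b + c := by simp [hb, hc]
  rw [hlen]
  simp only [Finset.range_eq_Ico]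
  have hsplit : Finset.Ico 0 (b + c + 1 - n) =
      (Finset.Ico 0 (b + 1 - n) ∪ Finset.Ico (b + 1 - n) b) ∪ Finset.Ico b (b + c + 1 - n) := by
    rw [Finset.Ico_union_Ico_eq_Ico (by omega) (by omega),
      Finset.Ico_union_Ico_eq_Ico (by omega) (by omega)]
  have hdisj1 : ∀ (p : ℕ → Prop) (inst : DecidablePred p),
      Disjoint ((Finset.Ico 0 (b+1-n)).filter p) ((Finset.Ico (b+1-n) b).filter p) :=
    fun p _ => Finset.disjoint_filter_filter (Finset.Ico_disjoint_Ico_consecutive _ _ _)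
  have hdisj2 : ∀ (p : ℕ → Prop) (inst : DecidablePred p),
      Disjoint (((Finset.Ico 0 (b+1-n)).filter p) ∪ ((Finset.Ico (b+1-n) b).filter p))
        ((Finset.Ico b (b+c+1-n)).filter p) := by
    intro p _
    rw [← Finset.filter_union, Finset.Ico_union_Ico_eq_Ico (by omega) (by omega)]
    exact Finset.disjoint_filter_filter (Finset.Ico_disjoint_Ico_consecutive _ _ _)
  rw [hsplit, Finset.filter_union, Finset.filter_union,
    Finset.card_union_of_disjoint (hdisj2 _ _), Finset.card_union_of_disjoint (hdisj1 _ _)]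
  have e1 : ((Finset.Ico 0 (b + 1 - n)).filter (fun i => w <+: (B ++ C).drop i)).card =
      ((Finset.Ico 0 (b + 1 - n)).filter (fun i => w <+: B.drop i)).card := by
    apply card_filter_shift 0 0 (b + 1 - n) 0 (b + 1 - n) (by omega) (by omega)
    intro i _ hi
    rw [Nat.add_zero]
    have hdrop : (B ++ C).drop i = B.drop i ++ C :=
      List.drop_append_of_le_length (by omega)
    rw [hdrop]
    exact prefix_append_iff_left (by simp only [List.length_drop]; omega)
  have e2 : ((Finset.Ico (b + 1 - n) b).filter (fun i => w <+: (B ++ C).drop i)).card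
      = sj w k := by
    unfold sj
    apply card_filter_shift (b - m) (m + 1 - n) m (b + 1 - n) b (by omega) (by omega)
    intro o ho1 ho2
    have hd1 : (B ++ C).drop (o + (b - m)) = (a k ++ C).drop o := by
      rw [← hBeq, List.append_assoc]
      have : o + (b - m) = B'.length + o := by omega
      rw [this, List.drop_length_add_append]
    have hd2 : (a k ++ C).drop o = (a k).drop o ++ C :=
      List.drop_append_of_le_length (by omega)
    have hd3 : (a k ++ a k).drop o = (a k).drop o ++ a k :=
      List.drop_append_of_le_length (by omega)
    rw [hd1, hd2, hd3]
    exact prefix_append_congr hC (by simp only [List.length_drop, ham]; omega)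
  have e3 : ((Finset.Ico b (b + c + 1 - n)).filter (fun i => w <+: (B ++ C).drop i)).card =
      ((Finset.Ico 0 (c + 1 - n)).filter (fun i => w <+: C.drop i)).card := by
    apply card_filter_shift b 0 (c + 1 - n) b (b + c + 1 - n) (by omega) (by omega)
    intro o _ ho
    have : (B ++ C).drop (o + b) = C.drop o := by
      have h2 : o + b = B.length + o := by omega
      rw [h2, List.drop_length_add_append]
    rw [this]
  rw [e1, e2, e3]
  simp only [← hb, ← hc, ← hn]
  omega

lemma countOccs_flatten {w : List Al} {k : ℕ} (hw : w ≠ []) (hwk : w.length ≤ L k) :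
    ∀ bs : List (List Al), bs ≠ [] → (∀ u ∈ bs, a k <+: u ∧ a k <:+ u) →
    countOccs bs.flatten w =
      (bs.map (fun u => countOccs u w)).sum + (bs.length - 1) * sj w k := by
  intro bs
  induction bs with
  | nil => intro h; exact absurd rfl h
  | cons u t ih =>
      intro _ hmem
      cases t with
      | nil => simp
      | cons v t' =>
          have hne : (v :: t') ≠ [] := by simp
          have hmem' : ∀ z ∈ (v :: t'), a k <+: z ∧ a k <:+ z :=
            fun z hz => hmem z (by simp [hz])
          have hC : a k <+: (v :: t').flatten := by
            have h1 : a k <+: v := (hmem' v (by simp)).1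
            rw [List.flatten_cons]
            exact h1.trans (v.prefix_append _)
          have hB : a k <:+ u := (hmem u (by simp)).2
          rw [List.flatten_cons, countOccs_append hw hwk hB hC, ih hne hmem']
          simp only [List.map_cons, List.sum_cons, List.length_cons, Nat.add_sub_cancel]
          rw [Nat.succ_mul]
          omega

lemma count_const {w : List Al} {k : ℕ} (hw : w ≠ []) (hwk : w.length ≤ L k) :
    ∀ B ∈ T (k+2), countOccs B w = countOccs (a (k+2)) w := by
  have key : ∀ B ∈ T (k+2), countOccs B w =
      (countOccs (a (k+1)) w) * 2 + ((T (k+1)).map (fun u => countOccs u w)).sum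
        + (N (k+1) + 1) * sj w k := by
    intro B hB
    obtain ⟨l, hperm, rfl⟩ := T_shape hB
    have hmem : ∀ u ∈ (a (k+1) :: (l ++ [a (k+1)])), a k <+: u ∧ a k <:+ u := by
      intro u hu
      rcases List.mem_cons.1 hu with rfl|hu
      · exact ⟨a_prefix_succ k, a_suffix_succ k⟩
      rcases List.mem_append.1 hu with hu|hu
      · exact ⟨mem_T_prefix (by omega) (hperm.subset hu),
          mem_T_suffix (by omega) (hperm.subset hu)⟩
      · simp at hu; subst hu
        exact ⟨a_prefix_succ k, a_suffix_succ k⟩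
    rw [countOccs_flatten hw hwk _ (by simp) hmem]
    have hsum : ((a (k+1) :: (l ++ [a (k+1)])).map (fun u => countOccs u w)).sum =
        countOccs (a (k+1)) w * 2 + ((T (k+1)).map (fun u => countOccs u w)).sum := by
      simp only [List.map_cons, List.sum_cons, List.map_append, List.sum_append,
        List.map_cons, List.map_nil, List.sum_cons, List.sum_nil]
      have : ((l.map (fun u => countOccs u w))).sum =
          ((T (k+1)).map (fun u => countOccs u w)).sum :=
        (hperm.map _).sum_eq
      omega
    rw [hsum]
    have hlen : (a (k+1) :: (l ++ [a (k+1)])).length = N (k+1) + 2 := by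
      simp [hperm.length_eq]
      rfl
    rw [hlen]
    have h21 : N (k+1) + 2 - 1 = N (k+1) + 1 := by omega
    rw [h21]
  intro B hB
  rw [key B hB, key (a (k+2)) (a_mem (k+2))]

end BalExp

-- Part D : positional counting and balance
namespace BalExp

lemma lt_div_succ_mul (a c : ℕ) (hc : 0 < c) : a < (a / c + 1) * c := by
  have h1 := Nat.div_add_mod a c
  have h2 := Nat.mod_lt a hc
  nlinarith

lemma div_add_le (a b c : ℕ) (hc : 0 < c) : (a + b) / c ≤ a / c + b / c + 1 := by
  have h1 : a < (a/c + 1) * c := lt_div_succ_mul a c hc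
  have h2 : b < (b/c + 1) * c := lt_div_succ_mul b c hc
  have h3 : a + b < (a/c + b/c + 2) * c := by nlinarith
  have := (Nat.div_lt_iff_lt_mul hc).2 h3
  omega

noncomputable def Gc (w : List Al) (i j : ℕ) : ℕ :=
  ((Finset.Ico i j).filter (fun p => OccursAt xw w p)).card

lemma Gc_add {w : List Al} {i j l : ℕ} (h1 : i ≤ j) (h2 : j ≤ l) :
    Gc w i l = Gc w i j + Gc w j l := by
  unfold Gc
  rw [← Finset.Ico_union_Ico_eq_Ico h1 h2, Finset.filter_union,
    Finset.card_union_of_disjoint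
      (Finset.disjoint_filter_filter (Finset.Ico_disjoint_Ico_consecutive _ _ _))]

lemma Gc_mono {w : List Al} {i j i' j' : ℕ} (h1 : i' ≤ i) (h2 : j ≤ j') :
    Gc w i j ≤ Gc w i' j' := by
  unfold Gc
  exact Finset.card_le_card
    (Finset.filter_subset_filter _ (Finset.Ico_subset_Ico h1 h2))

lemma count_seg {w : List Al} (hw : w ≠ []) {i n : ℕ} (hn : w.length ≤ n) :
    countOccs (seg i n) w = Gc w i (i + (n + 1 - w.length)) := by
  rw [countOccs_eq_card_small hw, seg_length, Finset.range_eq_Ico]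
  unfold Gc
  symm
  apply card_filter_shift i 0 (n + 1 - w.length) i (i + (n + 1 - w.length))
    (by omega) (by omega)
  intro o _ ho
  rw [show o + i = i + o by omega]
  show (w = seg (i + o) w.length) ↔ _
  rw [seg_drop, List.prefix_iff_eq_take, seg_take (i + o) (n - o) w.length (by omega)]

lemma countOccs_short {u w : List Al} (hw : w ≠ []) (h : u.length < w.length) :
    countOccs u w = 0 := by
  rw [countOccs_eq_card_small hw]
  have : u.length + 1 - w.length = 0 := by omega
  rw [this]
  simp

lemma count_block {w : List Al} {k : ℕ} (hw : w ≠ []) (hwk : w.length ≤ L k) (q : ℕ) :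
    Gc w (q * L (k+2)) (q * L (k+2) + (L (k+2) + 1 - w.length)) = countOccs (a (k+2)) w := by
  have hb := seg_mem (k+2) q
  have hK : w.length ≤ L (k+2) := le_trans hwk (L_le_L (by omega))
  rw [← count_const hw hwk _ hb, count_seg hw hK]

lemma junction_content {k : ℕ} (q : ℕ) :
    seg ((q+1) * L (k+2) - L k) (2 * L k) = a k ++ a k := by
  have hkK : L k ≤ L (k+2) := L_le_L (by omega)
  have h2 : 2 * L k = L k + L k := by ring
  have hqq : (q+1) * L (k+2) = q * L (k+2) + L (k+2) := by ring
  have hstart : (q+1) * L (k+2) - L k = q * L (k+2) + (L (k+2) - L k) := by omega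
  rw [h2, hstart, seg_append]
  congr 1
  · have hb := seg_mem (k+2) q
    have hsuf : a k <:+ seg (q * L (k+2)) (L (k+2)) := mem_T_suffix (by omega) hb
    obtain ⟨t, ht⟩ := hsuf
    have hlt : t.length = L (k+2) - L k := by
      have := congrArg List.length ht
      simp only [List.length_append, seg_length] at this
      have ham : (a k).length = L k := rfl
      omega
    have hss := seg_of_seg (rfl : seg (q * L (k+2)) (L (k+2)) = seg (q * L (k+2)) (L (k+2)))
      (t := L (k+2) - L k) (s := L k) (by omega)
    rw [hss, ← ht, show L (k+2) - L k = t.length from hlt.symm, List.drop_left]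
    exact List.take_of_length_le (Nat.le_refl _)
  · have hpos : q * L (k+2) + (L (k+2) - L k) + L k = (q+1) * L (k+2) := by omega
    rw [hpos]
    have hb := seg_mem (k+2) (q+1)
    have hpre : a k <+: seg ((q+1) * L (k+2)) (L (k+2)) := mem_T_prefix (by omega) hb
    have hss := seg_of_seg (rfl : seg ((q+1) * L (k+2)) (L (k+2)) = _)
      (t := 0) (s := L k) (by omega)
    rw [Nat.add_zero] at hss
    rw [hss, List.drop_zero]
    exact (take_eq_of_prefix hpre (Nat.le_refl _)).trans (List.take_of_length_le (Nat.le_refl _))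

lemma count_junction {w : List Al} {k : ℕ} (hw : w ≠ []) (hwk : w.length ≤ L k) (q : ℕ) :
    Gc w (q * L (k+2) + (L (k+2) + 1 - w.length)) ((q+1) * L (k+2)) = sj w k := by
  have hkK : L k ≤ L (k+2) := L_le_L (by omega)
  have hw1 : 1 ≤ w.length := List.length_pos_iff.2 hw
  have hqq : (q+1) * L (k+2) = q * L (k+2) + L (k+2) := by ring
  unfold Gc sj
  apply card_filter_shift ((q+1) * L (k+2) - L k) (L k + 1 - w.length) (L k)
    (q * L (k+2) + (L (k+2) + 1 - w.length)) ((q+1) * L (k+2)) (by omega) (by omega)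
  intro o ho1 ho2
  have hcont := junction_content (k := k) q
  have hss : seg (((q+1) * L (k+2) - L k) + o) w.length
      = ((a k ++ a k).drop o).take w.length := by
    apply seg_of_seg hcont
    omega
  rw [show o + ((q+1) * L (k+2) - L k) = ((q+1) * L (k+2) - L k) + o by omega]
  show (w = seg _ w.length) ↔ _
  rw [hss, List.prefix_iff_eq_take]

lemma G_aligned {w : List Al} {k : ℕ} (hw : w ≠ []) (hwk : w.length ≤ L k) :
    ∀ q, Gc w 0 (q * L (k+2)) = q * (countOccs (a (k+2)) w + sj w k) := by
  intro q
  induction q with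
  | zero => simp [Gc]
  | succ q ih =>
      have hw1 : 1 ≤ w.length := List.length_pos_iff.2 hw
      have hK : w.length ≤ L (k+2) := le_trans hwk (L_le_L (by omega))
      have hqq : (q+1) * L (k+2) = q * L (k+2) + L (k+2) := by ring
      have h1 : q * L (k+2) ≤ (q+1) * L (k+2) := by omega
      rw [Gc_add (Nat.zero_le _) h1, ih]
      have hmid1 : q * L (k+2) ≤ q * L (k+2) + (L (k+2) + 1 - w.length) := by omega
      have hmid2 : q * L (k+2) + (L (k+2) + 1 - w.length) ≤ (q+1) * L (k+2) := by omega
      rw [Gc_add hmid1 hmid2, count_block hw hwk q, count_junction hw hwk q]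
      ring

lemma Gc_upper {w : List Al} {k : ℕ} (hw : w ≠ []) (hwk : w.length ≤ L k) (i q : ℕ) :
    Gc w i (i + q) ≤ (q / L (k+2)) * (countOccs (a (k+2)) w + sj w k)
      + 2 * (countOccs (a (k+2)) w + sj w k) := by
  have hLp : 0 < L (k+2) := L_pos _
  have hb12 : i / L (k+2) ≤ (i + q) / L (k+2) + 1 := by
    have : i / L (k+2) ≤ (i + q) / L (k+2) := Nat.div_le_div_right (by omega)
    omega
  have hsub : Gc w i (i + q) ≤
      Gc w ((i / L (k+2)) * L (k+2)) ((((i + q) / L (k+2)) + 1) * L (k+2)) := by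
    apply Gc_mono
    · exact Nat.div_mul_le_self i _
    · have := lt_div_succ_mul (i + q) (L (k+2)) hLp
      omega
  have h0 : Gc w 0 ((((i + q) / L (k+2)) + 1) * L (k+2)) =
      Gc w 0 ((i / L (k+2)) * L (k+2))
        + Gc w ((i / L (k+2)) * L (k+2)) ((((i + q) / L (k+2)) + 1) * L (k+2)) :=
    Gc_add (Nat.zero_le _) (Nat.mul_le_mul_right _ hb12)
  rw [G_aligned hw hwk, G_aligned hw hwk] at h0
  have hd : (i + q) / L (k+2) + 1 ≤ i / L (k+2) + (q / L (k+2) + 2) := by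
    have := div_add_le i q (L (k+2)) hLp
    omega
  have hmul : ((i + q) / L (k+2) + 1) * (countOccs (a (k+2)) w + sj w k)
      ≤ (i / L (k+2) + (q / L (k+2) + 2)) * (countOccs (a (k+2)) w + sj w k) :=
    Nat.mul_le_mul_right _ hd
  have hVx : ∀ A B : ℕ, (A + B) * (countOccs (a (k+2)) w + sj w k)
      = A * (countOccs (a (k+2)) w + sj w k) + B * (countOccs (a (k+2)) w + sj w k) :=
    fun A B => Nat.add_mul _ _ _
  simp only [hVx, Nat.one_mul] at h0 hmul
  omega

lemma Gc_lower {w : List Al} {k : ℕ} (hw : w ≠ []) (hwk : w.length ≤ L k) (i q : ℕ) :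
    (q / L (k+2)) * (countOccs (a (k+2)) w + sj w k)
      ≤ Gc w i (i + q) + 2 * (countOccs (a (k+2)) w + sj w k) := by
  have hLp : 0 < L (k+2) := L_pos _
  rcases Nat.lt_or_ge ((i + q) / L (k+2)) (i / L (k+2) + 1) with hlt|hle
  · have hq2 : q / L (k+2) ≤ 2 := by
      have h2 := Nat.add_div_le_add_div i q (L (k+2))
      omega
    have : (q / L (k+2)) * (countOccs (a (k+2)) w + sj w k)
        ≤ 2 * (countOccs (a (k+2)) w + sj w k) := Nat.mul_le_mul_right _ hq2
    omega
  · have hsub : Gc w ((i / L (k+2) + 1) * L (k+2)) (((i + q) / L (k+2)) * L (k+2))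
        ≤ Gc w i (i + q) := by
      apply Gc_mono
      · have := lt_div_succ_mul i (L (k+2)) hLp
        omega
      · exact Nat.div_mul_le_self _ _
    have h0 : Gc w 0 (((i + q) / L (k+2)) * L (k+2)) =
        Gc w 0 ((i / L (k+2) + 1) * L (k+2))
          + Gc w ((i / L (k+2) + 1) * L (k+2)) (((i + q) / L (k+2)) * L (k+2)) :=
      Gc_add (Nat.zero_le _) (Nat.mul_le_mul_right _ hle)
    rw [G_aligned hw hwk, G_aligned hw hwk] at h0
    have hd : q / L (k+2) + (i / L (k+2) + 1) ≤ (i + q) / L (k+2) + 2 := by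
      have := Nat.add_div_le_add_div i q (L (k+2))
      omega
    have hmul : (q / L (k+2) + (i / L (k+2) + 1)) * (countOccs (a (k+2)) w + sj w k)
        ≤ ((i + q) / L (k+2) + 2) * (countOccs (a (k+2)) w + sj w k) :=
      Nat.mul_le_mul_right _ hd
    have hVx : ∀ A B : ℕ, (A + B) * (countOccs (a (k+2)) w + sj w k)
        = A * (countOccs (a (k+2)) w + sj w k) + B * (countOccs (a (k+2)) w + sj w k) :=
      fun A B => Nat.add_mul _ _ _
    simp only [hVx, Nat.one_mul] at h0 hmul
    omega

lemma countOccs_nil_word (u : List Al) : countOccs u ([] : List Al) = u.length + 1 := by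
  unfold countOccs
  have hr : u.length + 1 = (Finset.range (u.length + 1)).card := (Finset.card_range _).symm
  nth_rewrite 2 [hr]
  congr 1
  apply Finset.ext
  intro i
  simp only [Finset.mem_filter]
  exact ⟨fun h => h.1, fun h => ⟨h, List.nil_prefix⟩⟩

lemma balanced (w : List Al) : ∃ C : ℝ, 0 < C ∧ BalancedIn C w xw := by
  by_cases hw : w = []
  · refine ⟨1, one_pos, ?_⟩
    intro u v hu hv huv
    subst hw
    rw [countOccs_nil_word, countOccs_nil_word, huv]
    simp
  · set k := w.length with hk
    have hwk : w.length ≤ L k := by have := L_ge k; omega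
    set V := countOccs (a (k+2)) w + sj w k with hV
    refine ⟨4 * V + 1, by positivity, ?_⟩
    intro u v hu hv hlen
    rcases Nat.lt_or_ge u.length w.length with hshort|hlong
    · rw [countOccs_short hw hshort, countOccs_short hw (by omega)]
      simp
      positivity
    · obtain ⟨i, hi⟩ := hu
      obtain ⟨j, hj⟩ := hv
      set q := u.length + 1 - w.length with hq
      have hcu : countOccs u w = Gc w i (i + q) := by
        have : u = seg i u.length := hi
        rw [this, count_seg hw hlong]
      have hcv : countOccs v w = Gc w j (j + q) := by
        have : v = seg j v.length := hj
        rw [this, count_seg hw (by omega)]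
        rw [hq, hlen]
      have h1 := Gc_upper hw hwk i q
      have h2 := Gc_lower hw hwk i q
      have h3 := Gc_upper hw hwk j q
      have h4 := Gc_lower hw hwk j q
      have hN1 : countOccs u w ≤ countOccs v w + 4 * V := by
        rw [hcu, hcv, hV]
        omega
      have hN2 : countOccs v w ≤ countOccs u w + 4 * V := by
        rw [hcu, hcv, hV]
        omega
      rw [abs_sub_le_iff]
      constructor
      · have := (Nat.cast_le (α := ℝ)).2 hN1
        push_cast at this
        linarith
      · have := (Nat.cast_le (α := ℝ)).2 hN2
        push_cast at this
        linarith

theorem xw_factorBalanced : FactorBalanced xw := fun w => balanced w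

end BalExp

-- Part E : complexity lower bound
namespace BalExp

def factorSet (n : ℕ) : Set (List Al) := {w | w.length = n ∧ IsFactor xw w}

lemma complexity_eq (n : ℕ) : complexity xw n = (factorSet n).ncard := rfl

lemma factorSet_finite (n : ℕ) : (factorSet n).Finite := by
  apply Set.Finite.subset (Set.finite_range (fun f : Fin n → Al => List.ofFn f))
  intro w hw
  obtain ⟨hlen, _⟩ := hw
  subst hlen
  exact ⟨w.get, List.ofFn_get w⟩

lemma isFactor_iff (w : List Al) : IsFactor xw w ↔ ∃ i, w = seg i w.length := Iff.rfl

lemma factor_of_infix {u v : List Al} (hu : IsFactor xw u) (hv : v <:+: u) :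
    IsFactor xw v := by
  obtain ⟨i, hi⟩ := hu
  obtain ⟨s, t, hst⟩ := hv
  have hu_eq : seg i u.length = u := (occursAt_iff_seg.1 hi).symm
  refine ⟨i + s.length, ?_⟩
  show v = seg (i + s.length) v.length
  have hle : s.length + v.length ≤ u.length := by
    have := congrArg List.length hst
    simp at this
    omega
  rw [seg_of_seg hu_eq hle, ← hst, List.append_assoc, List.drop_left, List.take_left]

lemma a_isFactor (k : ℕ) : IsFactor xw (a k) :=
  ⟨0, by show a k = seg 0 (a k).length; rw [show (a k).length = L k from rfl, seg_zero_L]⟩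

lemma mem_T_isFactor {k : ℕ} {u : List Al} (hu : u ∈ T k) : IsFactor xw u := by
  apply factor_of_infix (a_isFactor (k+1))
  rw [a_succ]
  obtain ⟨s, t, hst⟩ := List.infix_of_mem_flatten hu
  exact ⟨a k ++ s, t ++ a k, by rw [← hst]; simp⟩

lemma complexity_mono {m n : ℕ} (h : m ≤ n) : complexity xw m ≤ complexity xw n := by
  rw [complexity_eq, complexity_eq]
  have hsub : factorSet m ⊆ (fun w => w.take m) '' factorSet n := by
    intro w hw
    obtain ⟨hlen, i, hi⟩ := hw
    refine ⟨seg i n, ⟨seg_length i n, ⟨i, ?_⟩⟩, ?_⟩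
    · show seg i n = seg i (seg i n).length
      rw [seg_length]
    · show (seg i n).take m = w
      rw [seg_take i n m h, ← hlen]
      exact (occursAt_iff_seg.1 hi).symm
  calc (factorSet m).ncard ≤ ((fun w => w.take m) '' factorSet n).ncard :=
        Set.ncard_le_ncard hsub ((factorSet_finite n).image _)
  _ ≤ (factorSet n).ncard := Set.ncard_image_le (factorSet_finite n)

lemma exists_perm_prefix {k : ℕ} {bs : List (List Al)} (hnd : bs.Nodup)
    (hmem : ∀ u ∈ bs, u ∈ T k) : ∃ l, (bs ++ l).Perm (T k) := by
  have hsub : List.Subperm bs (T k) := List.Nodup.subperm hnd hmem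
  have hle : (↑bs : Multiset (List Al)) ≤ ↑(T k) := Multiset.coe_le.2 hsub
  refine ⟨((↑(T k) : Multiset (List Al)) - ↑bs).toList, ?_⟩
  rw [← Multiset.coe_eq_coe, ← Multiset.coe_add, Multiset.coe_toList,
    add_tsub_cancel_of_le hle]

lemma flatten_isFactor {k : ℕ} {bs : List (List Al)} (hnd : bs.Nodup)
    (hmem : ∀ u ∈ bs, u ∈ T k) : IsFactor xw bs.flatten := by
  obtain ⟨l, hperm⟩ := exists_perm_prefix hnd hmem
  have hDmem : a k ++ (bs ++ l).flatten ++ a k ∈ T (k+1) := by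
    rw [T_succ]
    exact List.mem_map.2 ⟨bs ++ l, List.mem_permutations.2 hperm, rfl⟩
  apply factor_of_infix (mem_T_isFactor hDmem)
  rw [List.flatten_append]
  exact ⟨a k, l.flatten ++ a k, by simp⟩

lemma blocks_get (k : ℕ) : ∀ i : Fin (N k), (T k).get i ∈ T k := fun i => (T k).get_mem _

lemma desc_le_complexity (k r : ℕ) (hr1 : 1 ≤ r) (hrN : r ≤ N k) :
    (N k).descFactorial r ≤ complexity xw (r * L k) := by
  classical
  set Φ : (Fin r ↪ Fin (N k)) → List Al :=
    fun e => (List.ofFn (fun i : Fin r => (T k).get (e i))).flatten with hΦ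
  have hgetinj : Function.Injective (T k).get := List.nodup_iff_injective_get.1 (T_nodup k)
  have hmemT : ∀ (e : Fin r ↪ Fin (N k)), ∀ u ∈ List.ofFn (fun i : Fin r => (T k).get (e i)),
      u ∈ T k := by
    intro e u hu
    rw [List.mem_ofFn] at hu
    obtain ⟨i, rfl⟩ := hu
    exact (T k).get_mem _
  have hnd : ∀ (e : Fin r ↪ Fin (N k)), (List.ofFn (fun i : Fin r => (T k).get (e i))).Nodup := by
    intro e
    rw [List.nodup_ofFn]
    intro i j hij
    exact e.injective (hgetinj hij)
  have hmem : ∀ e, Φ e ∈ factorSet (r * L k) := by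
    intro e
    constructor
    · rw [hΦ]
      simp only [List.length_flatten]
      rw [sum_map_len _ (L k) (fun u hu => len_mem k u (hmemT e u hu)), List.length_ofFn]
    · exact flatten_isFactor (hnd e) (hmemT e)
  have hinj : Function.Injective Φ := by
    intro e1 e2 h
    have hlists := flatten_inj_aux (L k) (L_pos k) _ _
      (fun u hu => len_mem k u (hmemT e1 u hu)) (fun u hu => len_mem k u (hmemT e2 u hu)) h
    have hfn := List.ofFn_injective hlists
    apply DFunLike.ext
    intro i
    exact hgetinj (congrFun hfn i)
  have hcard : (Finset.univ.image Φ).card = (N k).descFactorial r := by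
    rw [Finset.card_image_of_injective _ hinj, Finset.card_univ, Fintype.card_embedding_eq,
      Fintype.card_fin, Fintype.card_fin]
  have hsub : ↑(Finset.univ.image Φ) ⊆ factorSet (r * L k) := by
    intro w hw
    simp only [Finset.coe_image, Set.mem_image, Finset.mem_coe] at hw
    obtain ⟨e, _, rfl⟩ := hw
    exact hmem e
  calc (N k).descFactorial r = (↑(Finset.univ.image Φ) : Set (List Al)).ncard := by
        rw [Set.ncard_coe_finset, hcard]
  _ ≤ (factorSet (r * L k)).ncard := Set.ncard_le_ncard hsub (factorSet_finite _)
  _ = complexity xw (r * L k) := (complexity_eq _).symm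

lemma desc_ge_pow : ∀ (M r : ℕ), r ≤ M → (M + 1 - r) ^ r ≤ M.descFactorial r := by
  intro M r
  induction r with
  | zero => intro _; simp
  | succ r ih =>
      intro hr
      rw [Nat.descFactorial_succ]
      have hM : M + 1 - (r+1) = M - r := by omega
      rw [hM, pow_succ']
      apply Nat.mul_le_mul_left
      calc (M - r) ^ r ≤ (M + 1 - r) ^ r := Nat.pow_le_pow_left (by omega) r
      _ ≤ M.descFactorial r := ih (by omega)

end BalExp

-- Part F : numerics and final theorem
namespace BalExp

lemma sq_le_pow : ∀ n : ℕ, n ^ 2 ≤ 2 ^ (n + 3) := by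
  intro n
  induction n with
  | zero => norm_num
  | succ n ih =>
      rcases Nat.lt_or_ge n 3 with h|h
      · interval_cases n <;> norm_num
      · have h1 : (n+1)^2 ≤ 2 * n^2 := by nlinarith
        have h2 : (2:ℕ)^(n+1+3) = 2 * 2^(n+3) := by ring
        omega

lemma fact_lower : ∀ n : ℕ, (n : ℝ) ^ n ≤ 3 ^ n * (n.factorial : ℝ) := by
  intro n
  induction n with
  | zero => simp
  | succ n ih =>
      rcases Nat.eq_zero_or_pos n with rfl|hn
      · norm_num
      have hnR : (0:ℝ) < n := by exact_mod_cast hn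
      have hsplit : ((n:ℝ) + 1) = (n:ℝ) * (1 + 1/(n:ℝ)) := by field_simp
      have hexp : (1 + 1/(n:ℝ)) ^ n ≤ 3 := by
        have h2 : (1 + 1/(n:ℝ)) ≤ Real.exp (1/(n:ℝ)) := by
          have := Real.add_one_le_exp (1/(n:ℝ))
          linarith
        have h3 : (1 + 1/(n:ℝ))^n ≤ Real.exp (1/(n:ℝ)) ^ n :=
          pow_le_pow_left₀ (by positivity) h2 n
        have h4 : Real.exp (1/(n:ℝ)) ^ n = Real.exp ((n:ℝ) * (1/(n:ℝ))) := by
          rw [← Real.exp_nat_mul]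
        have h5 : (n:ℝ) * (1/(n:ℝ)) = 1 := by field_simp
        have h6 : Real.exp 1 ≤ 3 := le_of_lt (lt_trans Real.exp_one_lt_d9 (by norm_num))
        calc (1 + 1/(n:ℝ))^n ≤ Real.exp (1/(n:ℝ)) ^ n := h3
        _ = Real.exp 1 := by rw [h4, h5]
        _ ≤ 3 := h6
      have hcast : ((n + 1 : ℕ) : ℝ) = (n : ℝ) + 1 := by push_cast; ring
      rw [hcast]
      have key : ((n:ℝ)+1)^(n+1) ≤ 3^(n+1) * ((n+1).factorial : ℝ) := by
        calc ((n:ℝ)+1)^(n+1) = ((n:ℝ)+1) * ((n:ℝ)+1)^n := by rw [pow_succ']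
        _ = ((n:ℝ)+1) * ((n:ℝ)^n * (1+1/(n:ℝ))^n) := by
            nth_rewrite 2 [hsplit]
            rw [mul_pow]
        _ ≤ ((n:ℝ)+1) * ((n:ℝ)^n * 3) := by
            have hnn : (0:ℝ) ≤ (n:ℝ)^n := by positivity
            have := mul_le_mul_of_nonneg_left hexp hnn
            nlinarith
        _ ≤ ((n:ℝ)+1) * (3^n * (n.factorial:ℝ) * 3) := by
            have h0 : (0:ℝ) ≤ (n:ℝ)+1 := by positivity
            have := mul_le_mul_of_nonneg_right ih (by norm_num : (0:ℝ) ≤ 3)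
            nlinarith
        _ = 3^(n+1) * (((n:ℝ)+1) * (n.factorial:ℝ)) := by ring
        _ = 3^(n+1) * ((n+1).factorial : ℝ) := by
            rw [Nat.factorial_succ]
            push_cast
            ring
      exact key

lemma NL : ∀ k, 2 ^ (2 * L k + 3) ≤ N k := by
  intro k
  induction k with
  | zero => rw [L_zero, N_zero]; norm_num
  | succ k ih =>
      rw [N_succ, L_succ]
      have hN32 := N_ge k
      have hLpos := L_pos k
      have hmain : (2:ℝ) ^ (2 * ((N k + 2) * L k) + 3) ≤ ((N k).factorial : ℝ) := by
        have hx32 : (32:ℝ) ≤ (N k : ℝ) := by exact_mod_cast hN32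
        have hxpos : (0:ℝ) < (N k : ℝ) := by linarith
        have hH : (2:ℝ) ^ (2 * L k + 3) ≤ (N k : ℝ) := by exact_mod_cast ih
        have hA : (2:ℝ) ^ (2 * L k) ≤ (N k : ℝ) / 8 := by
          have h1 : (2:ℝ) ^ (2*L k + 3) = 2^(2*L k) * 8 := by rw [pow_add]; norm_num
          rw [h1] at hH
          linarith
        have hB : (2:ℝ) ^ (4 * L k + 3) ≤ (N k : ℝ)^2 / 8 := by
          have h1 : (2:ℝ) ^ (4*L k + 3) = (2^(2*L k))^2 * 8 := by
            rw [← pow_mul, show 2*L k * 2 = 4 * L k from by ring, pow_add]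
            norm_num
          have h2 : (0:ℝ) ≤ (2:ℝ)^(2*L k) := by positivity
          calc (2:ℝ)^(4*L k+3) = ((2:ℝ)^(2*L k))^2 * 8 := h1
          _ ≤ ((N k : ℝ)/8)^2 * 8 := by nlinarith
          _ = (N k : ℝ)^2/8 := by ring
        have hsq : (N k : ℝ)^2 ≤ 8 * (8/3)^(N k) := by
          have h1 : ((N k)^2 : ℕ) ≤ 2^(N k + 3) := sq_le_pow (N k)
          have h2 : ((N k : ℝ))^2 ≤ (2:ℝ)^(N k + 3) := by exact_mod_cast h1
          have h3 : (2:ℝ)^(N k + 3) = 8 * 2^(N k) := by rw [pow_add]; ring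
          have h4 : (2:ℝ)^(N k) ≤ (8/3:ℝ)^(N k) := pow_le_pow_left₀ (by norm_num) (by norm_num) _
          rw [h3] at h2
          linarith
        have hfact : ((N k : ℝ)/3)^(N k) ≤ ((N k).factorial : ℝ) := by
          have hfl := fact_lower (N k)
          have h3 : ((N k : ℝ)/3)^(N k) = (N k : ℝ)^(N k) / 3^(N k) := div_pow _ 3 (N k)
          rw [h3, div_le_iff₀ (by positivity)]
          calc (N k : ℝ)^(N k) ≤ 3^(N k) * ((N k).factorial : ℝ) := hfl
          _ = ((N k).factorial : ℝ) * 3^(N k) := by ring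
        have hexp : 2 * ((N k + 2) * L k) + 3 = (2 * L k) * (N k) + (4 * L k + 3) := by ring
        rw [hexp, pow_add, pow_mul]
        have hstep1 : ((2:ℝ)^(2*L k))^(N k) ≤ ((N k : ℝ)/8)^(N k) :=
          pow_le_pow_left₀ (by positivity) hA _
        have hsplit : ((N k : ℝ)/8)^(N k) = ((N k : ℝ)/3)^(N k) * (3/8:ℝ)^(N k) := by
          rw [← mul_pow]
          congr 1
          ring
        have hone : (3/8:ℝ)^(N k) * ((N k : ℝ)^2/8) ≤ 1 := by
          have h1 : (3/8:ℝ)^(N k) * (8/3:ℝ)^(N k) = 1 := by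
            rw [← mul_pow]
            norm_num
          calc (3/8:ℝ)^(N k) * ((N k : ℝ)^2/8)
              ≤ (3/8:ℝ)^(N k) * ((8 * (8/3:ℝ)^(N k))/8) := by
                apply mul_le_mul_of_nonneg_left ?_ (by positivity)
                linarith
          _ = (3/8:ℝ)^(N k) * (8/3:ℝ)^(N k) := by ring
          _ = 1 := h1
        calc ((2:ℝ)^(2*L k))^(N k) * 2^(4*L k+3)
            ≤ ((N k : ℝ)/8)^(N k) * ((N k : ℝ)^2/8) := by
              apply mul_le_mul hstep1 hB (by positivity) (by positivity)
        _ = ((N k : ℝ)/3)^(N k) * ((3/8:ℝ)^(N k) * ((N k : ℝ)^2/8)) := by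
              rw [hsplit]
              ring
        _ ≤ ((N k : ℝ)/3)^(N k) * 1 := by
              apply mul_le_mul_of_nonneg_left hone (by positivity)
        _ = ((N k : ℝ)/3)^(N k) := mul_one _
        _ ≤ ((N k).factorial : ℝ) := hfact
      exact_mod_cast hmain

theorem complexity_ge (n : ℕ) (hn : 1 ≤ n) : 2 ^ n ≤ complexity xw n := by
  classical
  have hP0 : L 0 ≤ n := by rw [L_zero]; omega
  set k := Nat.findGreatest (fun k => L k ≤ n) n with hk
  have hkP : L k ≤ n := Nat.findGreatest_spec (P := fun j => L j ≤ n) (Nat.zero_le n) hP0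
  have hk2 : n < L (k+1) := by
    rcases Nat.lt_or_ge n (k+1) with h|h
    · have := L_ge (k+1)
      omega
    · have := Nat.findGreatest_is_greatest (P := fun k => L k ≤ n) (n := n)
        (k := k + 1) (by omega) h
      omega
  have hLsucc := L_succ k
  have hNL := NL k
  have hLpos := L_pos k
  have hN32 := N_ge k
  have h8 : (2:ℕ)^(2*L k+3) = 2 * 2^(2*L k+2) := by ring
  rcases Nat.lt_or_ge n (2 * L k + 3) with hsmall|hbig
  · have h1 : N k ≤ complexity xw (L k) := by
      have := desc_le_complexity k 1 (le_refl 1) (by omega)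
      rwa [Nat.descFactorial_one, Nat.one_mul] at this
    calc 2^n ≤ 2^(2*L k + 2) := Nat.pow_le_pow_right (by omega) (by omega)
    _ ≤ N k := by omega
    _ ≤ complexity xw (L k) := h1
    _ ≤ complexity xw n := complexity_mono hkP
  · set r := min (n / L k) (N k / 2) with hr
    have hq1 : 1 ≤ n / L k := (Nat.one_le_div_iff hLpos).2 hkP
    have hr1 : 1 ≤ r := by
      have : 16 ≤ N k / 2 := by omega
      omega
    have hrN2 : r ≤ N k / 2 := min_le_right _ _
    have hrN : r ≤ N k := by omega
    have hrq : r ≤ n / L k := min_le_left _ _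
    have hrL : r * L k ≤ n :=
      le_trans (Nat.mul_le_mul_right _ hrq) (Nat.div_mul_le_self n (L k))
    have hpow : 2 ^ ((2 * L k + 2) * r) ≤ complexity xw (r * L k) := by
      calc 2 ^ ((2*L k + 2) * r) = (2 ^ (2*L k + 2)) ^ r := by rw [pow_mul]
      _ ≤ (N k + 1 - r) ^ r := Nat.pow_le_pow_left (by omega) r
      _ ≤ (N k).descFactorial r := desc_ge_pow (N k) r hrN
      _ ≤ complexity xw (r * L k) := desc_le_complexity k r hr1 hrN
    have hexp : n ≤ (2 * L k + 2) * r := by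
      rcases Nat.lt_or_ge (n / L k) (N k / 2 + 1) with hcase|hcase
      · have hreq : r = n / L k := by omega
        have hnlt : n < (n / L k + 1) * L k := lt_div_succ_mul n (L k) hLpos
        rw [hreq]
        have hstep : n + 1 ≤ (2 * L k + 2) * (n / L k) + 1 := by
          calc n + 1 ≤ (n / L k + 1) * L k := hnlt
          _ ≤ (n / L k + n / L k) * L k := Nat.mul_le_mul_right _ (by omega)
          _ = (n / L k) * (2 * L k) := by ring
          _ ≤ (n / L k) * (2 * L k + 2) := Nat.mul_le_mul_left _ (by omega)
          _ = (2 * L k + 2) * (n / L k) := by ring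
          _ ≤ (2 * L k + 2) * (n / L k) + 1 := by omega
        omega
      · have hreq : r = N k / 2 := by omega
        rw [hreq]
        have hL1 : n + 1 ≤ (N k + 2) * L k := by omega
        have hN3L : 3 * L k + 1 ≤ N k := by
          have hll : L k < 2^(2 * L k) := by
            calc L k < 2 ^ (L k) := Nat.lt_two_pow_self
            _ ≤ 2 ^ (2 * L k) := Nat.pow_le_pow_right (by omega) (by omega)
          have h88 : (2:ℕ)^(2*L k+3) = 8 * 2^(2*L k) := by ring
          omega
        have hstep : n + 1 ≤ (2 * L k + 2) * (N k / 2) + 1 := by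
          calc n + 1 ≤ (N k + 2) * L k := hL1
          _ ≤ (2*(N k / 2) + 3) * L k := Nat.mul_le_mul_right _ (by omega)
          _ = (N k / 2) * (2 * L k) + 3 * L k := by ring
          _ ≤ (N k / 2) * (2 * L k) + N k := by omega
          _ ≤ (N k / 2) * (2 * L k) + (2 * (N k / 2) + 1) := by omega
          _ = (2 * L k + 2) * (N k / 2) + 1 := by ring
        omega
    calc 2^n ≤ 2^((2*L k + 2) * r) := Nat.pow_le_pow_right (by omega) hexp
    _ ≤ complexity xw (r * L k) := hpow
    _ ≤ complexity xw n := complexity_mono hrL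

end BalExp

/-- Theorem: there exists a factor-balanced infinite word over a finite alphabet with
exponential-growth factor complexity. -/
theorem stmt4 :
    ∃ (A : Type) (_ : Fintype A) (x : ℕ → A) (c : ℝ), 1 < c ∧
      FactorBalanced x ∧ ∀ n : ℕ, 1 ≤ n → c ^ n ≤ (complexity x n : ℝ) := by
  refine ⟨BalExp.Al, inferInstance, BalExp.xw, 2, one_lt_two,
    BalExp.xw_factorBalanced, ?_⟩
  intro n hn
  have h := BalExp.complexity_ge n hn
  calc (2:ℝ)^n = ((2^n : ℕ) : ℝ) := by push_cast; ring
  _ ≤ (complexity BalExp.xw n : ℝ) := Nat.cast_le.2 h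
end

section
/- Let x be an infinite word over a finite alphabet A, let k ≥ 1, and let π : A^k → B be a higher k-block code into a finite alphabet B. If x is factor-balanced, then the infinite word π(x) is factor-balanced. -/
/-!
An occurrence of a word `w` of length `m` in `π(x)` at position `p` is the same thing as an
occurrence at `p` in `x` of one of the finitely many words of length `m + k` that `π` maps to `w`.
Hence `|u|_w` for a factor `u` of `π(x)` is a sum, over this finite set of words `f` independent
of `u`, of the counts `|u'|_f` in a factor `u'` of `x` of length `|u| + k`; the balance constants
of these words add up to one for `w`.
-/

open scoped Classical

open Finset

section Factors

variable {A B : Type*}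

def factorAt (z : ℕ → A) (i n : ℕ) : List A := (List.range n).map fun t => z (i + t)

@[simp]
lemma length_factorAt (z : ℕ → A) (i n : ℕ) : (factorAt z i n).length = n := by
  simp [factorAt]

lemma occursAt_iff_eq_factorAt {z : ℕ → A} {w : List A} {i : ℕ} :
    OccursAt z w i ↔ w = factorAt z i w.length :=
  Iff.rfl

lemma isFactor_iff_exists_eq_factorAt {z : ℕ → A} {w : List A} :
    IsFactor z w ↔ ∃ i, w = factorAt z i w.length :=
  Iff.rfl

lemma isFactor_factorAt (z : ℕ → A) (i n : ℕ) : IsFactor z (factorAt z i n) :=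
  ⟨i, by rw [occursAt_iff_eq_factorAt, length_factorAt]⟩

lemma factorAt_eq_factorAt_iff {z : ℕ → A} {p q n : ℕ} :
    factorAt z p n = factorAt z q n ↔ ∀ s < n, z (p + s) = z (q + s) := by
  simp [factorAt, List.map_inj_left]

lemma isPrefix_drop_factorAt_iff {z : ℕ → A} {w : List A} {i n j : ℕ} (hj : j ≤ n) :
    w <+: (factorAt z i n).drop j ↔ j + w.length ≤ n ∧ OccursAt z w (i + j) := by
  rw [List.prefix_iff_eq_take, occursAt_iff_eq_factorAt]
  constructor
  · intro hw
    have hlen : j + w.length ≤ n := by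
      have := congrArg List.length hw
      simp only [List.length_take, List.length_drop, length_factorAt] at this
      omega
    refine ⟨hlen, hw.trans (List.ext_getElem (by simp; omega) fun t _ _ => ?_)⟩
    simp [factorAt, Nat.add_assoc]
  · rintro ⟨hlen, hw⟩
    refine hw.trans (List.ext_getElem (by simp; omega) fun t _ _ => ?_)
    simp [factorAt, Nat.add_assoc]

lemma countOccs_factorAt (z : ℕ → A) (w : List A) (i n : ℕ) :
    countOccs (factorAt z i n) w = #{j ∈ range (n + 1 - w.length) | OccursAt z w (i + j)} := by
  unfold countOccs
  congr 1
  ext j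
  simp only [mem_filter, mem_range, length_factorAt]
  constructor
  · rintro ⟨hj, hw⟩
    obtain ⟨hlen, hocc⟩ := (isPrefix_drop_factorAt_iff (by omega)).1 hw
    exact ⟨by omega, hocc⟩
  · rintro ⟨hj, hocc⟩
    exact ⟨by omega, (isPrefix_drop_factorAt_iff (by omega)).2 ⟨by omega, hocc⟩⟩

lemma countOccs_factorAt_eq_sum {x : ℕ → A} {y : ℕ → B} {w : List B} {L : ℕ}
    {T : Finset (List A)} (hT_length : ∀ f ∈ T, f.length = w.length + L)
    (hT : ∀ p, factorAt y p w.length = w ↔ factorAt x p (w.length + L) ∈ T) (i n : ℕ) :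
    countOccs (factorAt y i n) w = ∑ f ∈ T, countOccs (factorAt x i (n + L)) f := by
  have hocc : ∀ j, OccursAt y w (i + j) ↔ factorAt x (i + j) (w.length + L) ∈ T := fun j => by
    rw [occursAt_iff_eq_factorAt, eq_comm, hT]
  rw [countOccs_factorAt, filter_congr fun j _ => hocc j]
  refine (card_eq_sum_card_fiberwise (t := T) fun j hj => (mem_filter.1 hj).2).trans
    (sum_congr rfl fun f hf => ?_)
  rw [countOccs_factorAt, filter_filter, hT_length f hf,
    show n + L + 1 - (w.length + L) = n + 1 - w.length by omega]
  refine congrArg card (filter_congr fun j _ => ?_)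
  rw [occursAt_iff_eq_factorAt, hT_length f hf]
  exact ⟨fun h => h.2.symm, fun h => ⟨h ▸ hf, h.symm⟩⟩

end Factors

section LocalImages

variable {A B : Type*} [Finite A] {x : ℕ → A} {y : ℕ → B} {L : ℕ}

lemma exists_finset_factorAt_preimage
    (hxy : ∀ m p q, factorAt x p (m + L) = factorAt x q (m + L) → factorAt y p m = factorAt y q m)
    (w : List B) :
    ∃ T : Finset (List A), (∀ f ∈ T, f.length = w.length + L) ∧
      ∀ p, factorAt y p w.length = w ↔ factorAt x p (w.length + L) ∈ T := by
  set S : Set (List A) :=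
    {f | ∃ p, f = factorAt x p (w.length + L) ∧ factorAt y p w.length = w}
  have hS : S.Finite := (List.finite_length_eq A (w.length + L)).subset <| by
    rintro _ ⟨p, rfl, -⟩
    exact length_factorAt x p _
  refine ⟨hS.toFinset, fun f hf => ?_, fun p => ⟨fun hw => ?_, fun hf => ?_⟩⟩
  · obtain ⟨p, rfl, -⟩ := hS.mem_toFinset.1 hf
    exact length_factorAt x p _
  · exact hS.mem_toFinset.2 ⟨p, rfl, hw⟩
  · obtain ⟨q, hpq, hw⟩ := hS.mem_toFinset.1 hf
    rw [hxy _ p q hpq, hw]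

theorem FactorBalanced.of_factorAt_determined
    (hxy : ∀ m p q, factorAt x p (m + L) = factorAt x q (m + L) → factorAt y p m = factorAt y q m)
    (hx : FactorBalanced x) : FactorBalanced y := by
  intro w
  obtain ⟨T, hT_length, hT⟩ := exists_finset_factorAt_preimage hxy w
  choose C hC_pos hC using hx
  have hsum_nonneg : 0 ≤ ∑ f ∈ T, C f := sum_nonneg fun f _ => (hC_pos f).le
  refine ⟨1 + ∑ f ∈ T, C f, by linarith, fun u v hu hv huv => ?_⟩
  obtain ⟨i, hi⟩ := isFactor_iff_exists_eq_factorAt.1 hu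
  obtain ⟨j, hj⟩ := isFactor_iff_exists_eq_factorAt.1 hv
  rw [hi, hj, huv, countOccs_factorAt_eq_sum hT_length hT, countOccs_factorAt_eq_sum hT_length hT]
  push_cast
  calc |∑ f ∈ T, (countOccs (factorAt x i (v.length + L)) f : ℝ)
          - ∑ f ∈ T, (countOccs (factorAt x j (v.length + L)) f : ℝ)|
      ≤ ∑ f ∈ T, |(countOccs (factorAt x i (v.length + L)) f : ℝ)
          - countOccs (factorAt x j (v.length + L)) f| := by
        rw [← sum_sub_distrib]
        exact abs_sum_le_sum_abs _ _
    _ ≤ ∑ f ∈ T, C f := sum_le_sum fun f _ =>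
        hC f _ _ (isFactor_factorAt x i _) (isFactor_factorAt x j _) (by simp)
    _ ≤ 1 + ∑ f ∈ T, C f := by linarith

end LocalImages

theorem stmt7_general {A B : Type*} [Fintype A] (k : ℕ)
    (π : (Fin k → A) → B) (x : ℕ → A) (h : FactorBalanced x) :
    FactorBalanced (fun n => π fun j => x (n + (j : ℕ))) := by
  refine h.of_factorAt_determined (L := k) fun m p q hpq => ?_
  rw [factorAt_eq_factorAt_iff] at hpq ⊢
  intro s hs
  simp only [Nat.add_assoc]
  congr 1
  funext j
  exact hpq _ (by omega)

/-- Proposition: the image of a factor-balanced word under a higher `k`-block code is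
factor-balanced. -/
theorem stmt7 {A B : Type*} [Fintype A] [Fintype B] (k : ℕ) (hk : 1 ≤ k)
    (π : (Fin k → A) → B) (x : ℕ → A) (h : FactorBalanced x) :
    FactorBalanced (fun n => π fun j => x (n + (j : ℕ))) :=
  stmt7_general k π x h
end

section
/- Let x be a factor-balanced infinite word over a finite alphabet A, and let y and y′ be recurrent infinite words over A with L(y) ⊆ L(x) and L(y′) ⊆ L(x). Then: (1) y is uniformly recurrent; (2) L(y) = L(y′). In particular, every factor-balanced recurrent infinite word is uniformly recurrent. -/
open scoped Classical

/-! If `w` is a factor of the recurrent word `y`, it occurs infinitely often in `y`, so some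
prefix `u` of `y` contains more than `C_w` occurrences of `w`. As `u` is also a factor of `x`,
balance forces every factor of `x` of length `|u|` to contain at least one occurrence of `w`.
Applied to factors of `y` this is uniform recurrence; applied to prefixes of `y'` it shows that
`w` is a factor of `y'`. -/

section FactorBalanced

variable {A : Type*}

theorem occursAt_iff_getElem (z : ℕ → A) (w : List A) (i : ℕ) :
    OccursAt z w i ↔ ∀ k (hk : k < w.length), w[k] = z (i + k) := by
  constructor
  · intro h k hk
    rw [List.getElem_of_eq h hk]
    simp
  · intro h
    exact List.ext_getElem (by simp) fun k hk _ => by simp [h k hk]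

theorem IsFactor.of_isInfix {z : ℕ → A} {v w : List A} (hv : IsFactor z v) (hwv : w <:+: v) :
    IsFactor z w := by
  obtain ⟨j, hj⟩ := hv
  obtain ⟨s, t, rfl⟩ := hwv
  refine ⟨j + s.length, (occursAt_iff_getElem z w _).2 fun k hk => ?_⟩
  have := (occursAt_iff_getElem z _ j).1 hj (s.length + k) (by simp; omega)
  rw [Nat.add_assoc, ← this, List.getElem_append_left (by simp; omega),
    List.getElem_append_right (by omega)]
  simp

theorem isInfix_of_one_le_countOccs {v w : List A} (h : 1 ≤ countOccs v w) : w <:+: v := by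
  obtain ⟨i, hi⟩ := Finset.card_pos.mp h
  exact (Finset.mem_filter.mp hi).2.isInfix.trans (List.drop_suffix i v).isInfix

@[simp]
theorem length_wordPrefix (z : ℕ → A) (N : ℕ) : (wordPrefix z N).length = N := by
  simp [wordPrefix]

theorem isFactor_wordPrefix (z : ℕ → A) (N : ℕ) : IsFactor z (wordPrefix z N) :=
  ⟨0, by simp [OccursAt, wordPrefix]⟩

theorem isPrefix_drop_wordPrefix_of_occursAt {z : ℕ → A} {w : List A} {i N : ℕ}
    (h : OccursAt z w i) (hN : i + w.length ≤ N) : w <+: (wordPrefix z N).drop i := by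
  rw [List.prefix_iff_eq_take]
  refine List.ext_getElem (by simp [wordPrefix]; omega) fun k hk _ => ?_
  simp [wordPrefix, (occursAt_iff_getElem z w i).1 h k hk]

theorem card_occursAt_le_countOccs_wordPrefix (z : ℕ → A) (w : List A) (N : ℕ) :
    ((Finset.range (N + 1 - w.length)).filter (OccursAt z w)).card ≤
      countOccs (wordPrefix z N) w := by
  refine Finset.card_le_card fun i hi => ?_
  obtain ⟨hiN, hocc⟩ := Finset.mem_filter.mp hi
  rw [Finset.mem_range] at hiN
  exact Finset.mem_filter.mpr ⟨Finset.mem_range.mpr (by simp; omega),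
    isPrefix_drop_wordPrefix_of_occursAt hocc (by omega)⟩

theorem Recurrent.infinite_setOf_occursAt {z : ℕ → A} (hz : Recurrent z) {w : List A}
    (hw : IsFactor z w) : {i | OccursAt z w i}.Infinite :=
  Set.infinite_of_forall_exists_gt fun n =>
    let ⟨i, hni, hi⟩ := hz w hw (n + 1)
    ⟨i, hi, hni⟩

theorem Recurrent.exists_le_countOccs_wordPrefix {z : ℕ → A} (hz : Recurrent z) {w : List A}
    (hw : IsFactor z w) (m : ℕ) : ∃ N, m ≤ countOccs (wordPrefix z N) w := by
  obtain ⟨s, hs, rfl⟩ := (hz.infinite_setOf_occursAt hw).exists_subset_card_eq m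
  refine ⟨s.sup id + w.length, le_trans (Finset.card_le_card fun i hi => ?_)
    (card_occursAt_le_countOccs_wordPrefix z w _)⟩
  have := Finset.le_sup (f := id) hi
  exact Finset.mem_filter.mpr ⟨Finset.mem_range.mpr (by simp at this; omega), hs hi⟩

theorem FactorBalanced.exists_forall_one_le_countOccs {x y : ℕ → A} (hx : FactorBalanced x)
    (hy : Recurrent y) (hyx : ∀ w, IsFactor y w → IsFactor x w) {w : List A}
    (hw : IsFactor y w) :
    ∃ N, ∀ v, IsFactor x v → v.length = N → 1 ≤ countOccs v w := by
  obtain ⟨C, -, hC⟩ := hx w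
  obtain ⟨N, hN⟩ := hy.exists_le_countOccs_wordPrefix hw (⌈C⌉₊ + 1)
  refine ⟨N, fun v hv hvN => ?_⟩
  have hbal := (abs_le.mp (hC _ v (hyx _ (isFactor_wordPrefix y N)) hv (by simp [hvN]))).2
  have hmany : (⌈C⌉₊ + 1 : ℝ) ≤ countOccs (wordPrefix y N) w := by exact_mod_cast hN
  have hpos : (0 : ℝ) < countOccs v w := by linarith [Nat.le_ceil C]
  exact_mod_cast hpos

theorem FactorBalanced.uniformlyRecurrent {x y : ℕ → A} (hx : FactorBalanced x)
    (hy : Recurrent y) (hyx : ∀ w, IsFactor y w → IsFactor x w) : UniformlyRecurrent y :=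
  fun _ hw =>
    let ⟨N, hN⟩ := hx.exists_forall_one_le_countOccs hy hyx hw
    ⟨N, fun v hv => hN v (hyx v hv)⟩

theorem FactorBalanced.isFactor_of_recurrent {x y y' : ℕ → A} (hx : FactorBalanced x)
    (hy : Recurrent y) (hyx : ∀ w, IsFactor y w → IsFactor x w)
    (hy'x : ∀ w, IsFactor y' w → IsFactor x w) {w : List A} (hw : IsFactor y w) :
    IsFactor y' w := by
  obtain ⟨N, hN⟩ := hx.exists_forall_one_le_countOccs hy hyx hw
  have hpre := isFactor_wordPrefix y' N
  exact hpre.of_isInfix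
    (isInfix_of_one_le_countOccs (hN _ (hy'x _ hpre) (length_wordPrefix y' N)))

end FactorBalanced

theorem stmt9_general {A : Type*} (x y y' : ℕ → A)
    (hx : FactorBalanced x) (hy : Recurrent y) (hy' : Recurrent y')
    (hsub : ∀ w : List A, IsFactor y w → IsFactor x w)
    (hsub' : ∀ w : List A, IsFactor y' w → IsFactor x w) :
    (UniformlyRecurrent y ∧ ∀ w : List A, IsFactor y w ↔ IsFactor y' w) ∧
      ∀ z : ℕ → A, FactorBalanced z → Recurrent z → UniformlyRecurrent z :=
  ⟨⟨hx.uniformlyRecurrent hy hsub, fun _ =>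
      ⟨hx.isFactor_of_recurrent hy hsub hsub', hx.isFactor_of_recurrent hy' hsub' hsub⟩⟩,
    fun _ hz hzrec => hz.uniformlyRecurrent hzrec fun _ => id⟩

/-- Proposition: if `x` is factor-balanced and `y, y'` are recurrent words whose factors
are factors of `x`, then `y` is uniformly recurrent and `L(y) = L(y')`; in particular,
every factor-balanced recurrent word is uniformly recurrent. -/
theorem stmt9 {A : Type*} [Fintype A] (x y y' : ℕ → A)
    (hx : FactorBalanced x) (hy : Recurrent y) (hy' : Recurrent y')
    (hsub : ∀ w : List A, IsFactor y w → IsFactor x w)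
    (hsub' : ∀ w : List A, IsFactor y' w → IsFactor x w) :
    (UniformlyRecurrent y ∧ ∀ w : List A, IsFactor y w ↔ IsFactor y' w) ∧
      ∀ z : ℕ → A, FactorBalanced z → Recurrent z → UniformlyRecurrent z :=
  stmt9_general x y y' hx hy hy' hsub hsub'
end

section
/- Let x be a recurrent infinite word over a finite alphabet that is not eventually periodic, and suppose x is uniformly factor-balanced with constant C, a positive integer (i.e., every finite word is C-balanced in x). Then x is (2C+3)-power-free. -/
/-!
If `v ^ (2C+3)` is a factor of `x`, it contains `v ^ (C+2)` at `C + 2` positions, so by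
`C`-balance every factor of length `(2C+3)|v|` contains `v ^ (C+2)` at least twice, hence once
ending before its last letter. Sliding such a window along `x` places every position
`m ≥ (C+1)|v|`, together with `m + |v|`, inside one occurrence of `v ^ (C+2)`; thus `x` is
eventually periodic with period `|v|`.
-/

open scoped Classical

section

variable {A : Type*}

theorem occursAt_iff {x : ℕ → A} {w : List A} {i : ℕ} :
    OccursAt x w i ↔ ∀ j (hj : j < w.length), w[j] = x (i + j) := by
  refine ⟨fun h j hj => by simpa using List.getElem_of_eq h hj, fun h => ?_⟩
  exact List.ext_getElem (by simp) fun j hj _ => by simpa using h j hj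

theorem occursAt_map_range (x : ℕ → A) (t L : ℕ) :
    OccursAt x ((List.range L).map fun j => x (t + j)) t :=
  occursAt_iff.mpr fun j hj => by simp

theorem OccursAt.of_prefix_drop {x : ℕ → A} {z u : List A} {t p : ℕ}
    (hz : OccursAt x z t) (hu : u <+: z.drop p) : OccursAt x u (t + p) := by
  refine occursAt_iff.mpr fun j hj => ?_
  have hpj : p + j < z.length := by
    have := hu.length_le
    simp only [List.length_drop] at this
    omega
  rw [hu.getElem hj, List.getElem_drop, occursAt_iff.mp hz _ hpj, Nat.add_assoc]

theorem OccursAt.apply_eq {x : ℕ → A} {w : List A} {i i' j : ℕ}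
    (h : OccursAt x w i) (h' : OccursAt x w i') (hj : j < w.length) :
    x (i + j) = x (i' + j) := by
  rw [← occursAt_iff.mp h j hj, occursAt_iff.mp h' j hj]

theorem length_flatten_replicate (v : List A) (n : ℕ) :
    (List.replicate n v).flatten.length = n * v.length := by
  simp [List.length_flatten, List.sum_replicate]

theorem flatten_replicate_prefix_drop (v : List A) {k l n : ℕ} (h : k + l ≤ n) :
    (List.replicate l v).flatten <+: (List.replicate n v).flatten.drop (k * v.length) := by
  obtain ⟨m, rfl⟩ := Nat.exists_eq_add_of_le h
  rw [List.replicate_add, List.replicate_add, List.flatten_append, List.flatten_append,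
    List.append_assoc, List.drop_left' (length_flatten_replicate v k)]
  exact List.prefix_append _ _

theorem OccursAt.apply_add_length_eq {x : ℕ → A} {v : List A} {n p m : ℕ}
    (h : OccursAt x (List.replicate n v).flatten p) (hpm : p ≤ m)
    (hm : m + v.length < p + n * v.length) :
    x (m + v.length) = x m := by
  cases n with
  | zero => omega
  | succ n =>
    -- `v ^ n` occurs both at `p` and at `p + |v|`
    have h₀ := h.of_prefix_drop (flatten_replicate_prefix_drop v (k := 0) (l := n) (by omega))
    have h₁ := h.of_prefix_drop (flatten_replicate_prefix_drop v (k := 1) (l := n) (by omega))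
    have hj : m - p < (List.replicate n v).flatten.length := by
      rw [length_flatten_replicate]
      rw [Nat.succ_mul] at hm
      omega
    have := h₁.apply_eq h₀ hj
    rwa [one_mul, zero_mul, show p + v.length + (m - p) = m + v.length by omega,
      show p + 0 + (m - p) = m by omega] at this

theorem le_countOccs_flatten_replicate {v : List A} (hv : v ≠ []) {k n : ℕ} (h : k ≤ n) :
    n - k + 1 ≤ countOccs (List.replicate n v).flatten (List.replicate k v).flatten := by
  have hq : 0 < v.length := List.length_pos_iff.mpr hv
  have hsub : (Finset.range (n - k + 1)).image (· * v.length) ⊆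
      (Finset.range ((List.replicate n v).flatten.length + 1)).filter
        fun i => (List.replicate k v).flatten <+: (List.replicate n v).flatten.drop i := by
    simp only [Finset.subset_iff, Finset.mem_image, Finset.mem_range, Finset.mem_filter,
      length_flatten_replicate]
    rintro _ ⟨i, hi, rfl⟩
    exact ⟨Nat.lt_succ_of_le (Nat.mul_le_mul_right _ (by omega)),
      flatten_replicate_prefix_drop v (by omega)⟩
  calc n - k + 1 = ((Finset.range (n - k + 1)).image (· * v.length)).card := by
        rw [Finset.card_image_of_injective _ (mul_left_injective₀ hq.ne'), Finset.card_range]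
    _ ≤ _ := Finset.card_le_card hsub

theorem exists_prefix_drop_of_one_lt_countOccs {z w : List A} (h : 1 < countOccs z w) :
    ∃ a, a + w.length < z.length ∧ w <+: z.drop a := by
  obtain ⟨a, ha, b, hb, hab⟩ := Finset.one_lt_card.mp h
  simp only [Finset.mem_filter, Finset.mem_range] at ha hb
  have hlen {c : ℕ} (hcz : c < z.length + 1) (hc : w <+: z.drop c) :
      c + w.length ≤ z.length := by
    have := hc.length_le
    simp only [List.length_drop] at this
    omega
  rcases lt_or_gt_of_ne hab with hlt | hlt
  · exact ⟨a, by have := hlen hb.1 hb.2; omega, ha.2⟩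
  · exact ⟨b, by have := hlen ha.1 ha.2; omega, hb.2⟩

theorem BalancedIn.countOccs_le_add {C : ℕ} {w : List A} {x : ℕ → A} (hw : BalancedIn C w x)
    {u z : List A} (hu : IsFactor x u) (hz : IsFactor x z) (hlen : u.length = z.length) :
    countOccs u w ≤ countOccs z w + C := by
  have := (abs_le.mp (hw u z hu hz hlen)).2
  exact_mod_cast (by linarith : (countOccs u w : ℝ) ≤ countOccs z w + C)

/-- By balance the factor of length `|W|` at `t` contains `u` at least twice, so its first
occurrence there ends before the last letter. -/
theorem BalancedIn.exists_occursAt_window {C : ℕ} {u W : List A} {x : ℕ → A}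
    (hu : BalancedIn C u x) (hW : IsFactor x W) (hcount : C + 2 ≤ countOccs W u) (t : ℕ) :
    ∃ p, t ≤ p ∧ p + u.length < t + W.length ∧ OccursAt x u p := by
  set z := (List.range W.length).map fun j => x (t + j)
  have hz : OccursAt x z t := occursAt_map_range x t W.length
  have hzlen : z.length = W.length := by simp [z]
  have htwo := hu.countOccs_le_add hW ⟨t, hz⟩ hzlen.symm
  obtain ⟨a, ha, hpre⟩ := exists_prefix_drop_of_one_lt_countOccs (by omega : 1 < countOccs z u)
  exact ⟨t + a, by omega, by omega, hz.of_prefix_drop hpre⟩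

theorem apply_add_length_eq_of_forall_window {x : ℕ → A} {v : List A} {k : ℕ}
    (h : ∀ t, ∃ p, t ≤ p ∧ p + (k + 1) * v.length < t + (2 * k + 1) * v.length ∧
      OccursAt x (List.replicate (k + 1) v).flatten p) :
    ∀ m, k * v.length ≤ m → x (m + v.length) = x m := by
  intro m hm
  obtain ⟨p, htp, hpt, hp⟩ := h (m + 1 - k * v.length)
  refine hp.apply_add_length_eq ?_ ?_ <;>
  · simp only [add_mul, one_mul, mul_assoc] at hpt ⊢
    omega

end

theorem stmt11_general {A : Type*} (x : ℕ → A)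
    (hnp : ¬ ∃ p : ℕ, 1 ≤ p ∧ ∃ N : ℕ, ∀ n : ℕ, N ≤ n → x (n + p) = x n)
    (C : ℕ) (hbal : ∀ w : List A, BalancedIn (C : ℝ) w x) :
    PowerFree (2 * C + 3) x := by
  rintro v hv ⟨i, hi⟩
  have hcount := le_countOccs_flatten_replicate hv (show C + 2 ≤ 2 * C + 3 by omega)
  refine hnp ⟨v.length, List.length_pos_iff.mpr hv, (C + 1) * v.length,
    apply_add_length_eq_of_forall_window fun t => ?_⟩
  obtain ⟨p, htp, hpt, hp⟩ :=
    (hbal (List.replicate (C + 2) v).flatten).exists_occursAt_window ⟨i, hi⟩ (by omega) t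
  refine ⟨p, htp, ?_, hp⟩
  rwa [length_flatten_replicate, length_flatten_replicate,
    show 2 * C + 3 = 2 * (C + 1) + 1 by ring] at hpt

/-- Corollary: an aperiodic recurrent word that is uniformly factor-balanced with
constant `C` is `(2C+3)`-power-free. -/
theorem stmt11 {A : Type*} [Fintype A] (x : ℕ → A) (hrec : Recurrent x)
    (hnp : ¬ ∃ p : ℕ, 1 ≤ p ∧ ∃ N : ℕ, ∀ n : ℕ, N ≤ n → x (n + p) = x n)
    (C : ℕ) (hC : 1 ≤ C) (hbal : ∀ w : List A, BalancedIn (C : ℝ) w x) :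
    PowerFree (2 * C + 3) x :=
  stmt11_general x hnp C hbal
end

section
/- Let P ≥ 1 be an integer and let x be a P-power-free infinite word over a finite alphabet. Then for every nonempty factor u of x and every factor v of x, the number of occurrences of u in v satisfies |v|_u ≤ P·|v| / |u|. -/
open scoped Classical

/-! If `u` occurs in `x` at positions `p` and `p + d` with `0 < d` and `(P - 1) d ≤ |u|`, then
`x` is `d`-periodic on the window `[p, p + |u| + d)`, which therefore contains the `P`-th power
of `x[p, p + d)`. So in a `P`-power-free word any two occurrences of `u` are more than
`|u| / (P - 1)` apart. The occurrences of `u` in `v` start in `[0, |v| - |u|]`, so there are at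
most `1 + (P - 1)(|v| - |u|) / |u|` of them, and `|v|_u · |u| ≤ P |v|`. -/

namespace OccursAt

variable {A : Type*} {x : ℕ → A} {w z : List A} {i : ℕ}

lemma getElem_eq (h : OccursAt x w i) {t : ℕ} (ht : t < w.length) : w[t] = x (i + t) := by
  conv_lhs => rw [List.getElem_of_eq h ht]
  simp

lemma of_getElem (h : ∀ t (ht : t < w.length), w[t] = x (i + t)) : OccursAt x w i :=
  List.ext_getElem (by simp) fun t h₁ _ => by simpa using h t h₁

lemma append (hw : OccursAt x w i) (hz : OccursAt x z (i + w.length)) :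
    OccursAt x (w ++ z) i := by
  refine of_getElem fun t ht => ?_
  rcases lt_or_ge t w.length with h | h
  · rw [List.getElem_append_left h, hw.getElem_eq h]
  · rw [List.getElem_append_right h, hz.getElem_eq (by simp at ht ⊢; omega)]
    congr 1
    omega

lemma flatten_replicate {k : ℕ} (h : ∀ m < k, OccursAt x w (i + m * w.length)) :
    OccursAt x (List.replicate k w).flatten i := by
  induction k with
  | zero => simp [OccursAt]
  | succ k ih =>
    rw [List.replicate_succ', List.flatten_append, List.flatten_singleton]
    refine (ih fun m hm => h m (by omega)).append ?_
    simpa [mul_comm] using h k (by omega)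

lemma of_prefix_drop_s12 {v : List A} {q : ℕ} (hv : OccursAt x v q) (h : w <+: v.drop i) :
    OccursAt x w (q + i) := by
  have hlen : w.length ≤ v.length - i := by simpa using h.length_le
  refine of_getElem fun t ht => ?_
  rw [h.getElem ht, List.getElem_drop, hv.getElem_eq (by omega)]
  congr 1
  omega

end OccursAt

section PowerFree

variable {A : Type*} {x : ℕ → A} {P : ℕ}

lemma PowerFree.pos (hpf : PowerFree P x) : 0 < P := by
  refine Nat.pos_of_ne_zero fun hP => hpf [x 0] (by simp) ⟨0, ?_⟩
  simp [hP, OccursAt]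

lemma apply_add_mul_eq_of_occursAt {u : List A} {p d : ℕ}
    (h₁ : OccursAt x u p) (h₂ : OccursAt x u (p + d)) (m t : ℕ)
    (hmt : m * d + t < u.length + d) : x (p + (m * d + t)) = x (p + t) := by
  induction m generalizing t with
  | zero => simp
  | succ m ih =>
    rw [Nat.succ_mul] at hmt
    have hlt : m * d + t < u.length := by omega
    calc x (p + ((m + 1) * d + t)) = x (p + d + (m * d + t)) := by congr 1; ring
      _ = x (p + (m * d + t)) := by rw [← h₂.getElem_eq hlt, h₁.getElem_eq hlt]
      _ = x (p + t) := ih t (by omega)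

lemma PowerFree.length_lt_mul_of_occursAt {k : ℕ} (hpf : PowerFree (k + 1) x)
    {u : List A} {p d : ℕ} (hd : 0 < d) (h₁ : OccursAt x u p) (h₂ : OccursAt x u (p + d)) :
    u.length < k * d := by
  by_contra! hle
  set w := (List.range d).map fun j => x (p + j)
  have hw : w.length = d := by simp [w]
  refine hpf w (by simp [← List.length_pos_iff, hw, hd]) ⟨p, OccursAt.flatten_replicate ?_⟩
  intro m hm
  refine OccursAt.of_getElem fun t ht => ?_
  rw [hw] at ht ⊢
  have : m * d ≤ k * d := Nat.mul_le_mul_right d (by omega)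
  simp only [w, List.getElem_map, List.getElem_range, add_assoc]
  exact (apply_add_mul_eq_of_occursAt h₁ h₂ m t (by omega)).symm

end PowerFree

lemma Finset.card_sub_one_mul_le_of_separated {S : Finset ℕ} {a b L : ℕ}
    (hL : ∀ i ∈ S, i ≤ L) (hsep : ∀ i ∈ S, ∀ j ∈ S, i < j → b ≤ a * (j - i)) :
    (S.card - 1) * b ≤ a * L := by
  induction S using Finset.induction_on_max generalizing L with
  | empty => simp
  | insert c s hlt ih =>
    rw [Finset.card_insert_of_notMem fun hc => (hlt c hc).false, Nat.add_sub_cancel]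
    rcases s.eq_empty_or_nonempty with rfl | hs
    · simp
    set m := s.max' hs
    have hm : m ∈ s := s.max'_mem hs
    have hs_le : (s.card - 1) * b ≤ a * m :=
      ih (fun i hi => s.le_max' i hi) fun i hi j hj =>
        hsep i (Finset.mem_insert_of_mem hi) j (Finset.mem_insert_of_mem hj)
    have hgap : b ≤ a * (c - m) :=
      hsep m (Finset.mem_insert_of_mem hm) c (Finset.mem_insert_self c s) (hlt m hm)
    have hcL : c ≤ L := hL c (Finset.mem_insert_self c s)
    have hmc : m < c := hlt m hm
    calc s.card * b = (s.card - 1) * b + b := by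
          rw [← Nat.succ_mul, Nat.succ_eq_add_one, Nat.sub_add_cancel hs.card_pos]
      _ ≤ a * m + a * (c - m) := add_le_add hs_le hgap
      _ = a * c := by rw [← mul_add, Nat.add_sub_cancel' hmc.le]
      _ ≤ a * L := Nat.mul_le_mul_left a hcL

lemma countOccs_mul_length_le {A : Type*} {u v : List A} {k : ℕ}
    (hsep : ∀ i j, i < j → u <+: v.drop i → u <+: v.drop j → u.length < k * (j - i)) :
    countOccs v u * u.length ≤ (k + 1) * v.length := by
  set S := (Finset.range (v.length + 1)).filter fun i => u <+: v.drop i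
  have hS : ∀ i ∈ S, u <+: v.drop i := fun i hi => (Finset.mem_filter.mp hi).2
  have hfit : ∀ i ∈ S, i + u.length ≤ v.length := fun i hi => by
    have hi' := Finset.mem_range.mp (Finset.mem_filter.mp hi).1
    have := (hS i hi).length_le
    simp only [List.length_drop] at this
    omega
  change S.card * u.length ≤ _
  rcases S.eq_empty_or_nonempty with hempty | ⟨i₀, hi₀⟩
  · simp [hempty]
  have hcount : (S.card - 1) * (u.length + 1) ≤ k * (v.length - u.length) :=
    Finset.card_sub_one_mul_le_of_separated (fun i hi => by have := hfit i hi; omega)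
      fun i hi j hj hij => hsep i j hij (hS i hi) (hS j hj)
  have huv : u.length ≤ v.length := by have := hfit i₀ hi₀; omega
  have hpos : 0 < S.card := S.card_pos.mpr ⟨i₀, hi₀⟩
  nlinarith [Nat.sub_add_cancel huv, Nat.sub_add_cancel hpos]

theorem stmt12_general {A : Type*} (P : ℕ) (x : ℕ → A)
    (hpf : PowerFree P x) (u v : List A) (hu : u ≠ [])
    (hfv : IsFactor x v) :
    (countOccs v u : ℝ) ≤ (P : ℝ) * (v.length : ℝ) / (u.length : ℝ) := by
  obtain ⟨k, rfl⟩ : ∃ k, P = k + 1 := Nat.exists_eq_add_one.mpr hpf.pos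
  obtain ⟨q, hq⟩ := hfv
  have hcount : countOccs v u * u.length ≤ (k + 1) * v.length :=
    countOccs_mul_length_le fun i j hij hi hj => by
      have h₂ := hq.of_prefix_drop_s12 hj
      rw [show q + j = q + i + (j - i) by omega] at h₂
      exact hpf.length_lt_mul_of_occursAt (by omega) (hq.of_prefix_drop_s12 hi) h₂
  rw [le_div_iff₀ (by exact_mod_cast List.length_pos_iff.mpr hu)]
  exact_mod_cast hcount

/-- Lemma: in a `P`-power-free word `x`, any nonempty factor `u` occurs at most
`P·|v|/|u|` times in any factor `v`. -/
theorem stmt12 {A : Type*} [Fintype A] (P : ℕ) (hP : 1 ≤ P) (x : ℕ → A)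
    (hpf : PowerFree P x) (u v : List A) (hu : u ≠ [])
    (hfu : IsFactor x u) (hfv : IsFactor x v) :
    (countOccs v u : ℝ) ≤ (P : ℝ) * (v.length : ℝ) / (u.length : ℝ) :=
  stmt12_general P x hpf u v hu hfv
end

section
/- Let τ : A → B* be a substitution that is k-decisive in an infinite word x over A, with associated map r : A → B^k. Suppose a finite word w occurs at position i of x (i.e., w = x_i x_{i+1} ⋯ x_{i+|w|−1}), and let p = |τ(x_0 x_1 ⋯ x_{i+|w|−1})|. Then for every factor u of τ(x) with 1 ≤ |u| ≤ k+1, the number of occurrences of u in the finite word consisting of τ(w) followed by the next |u|−1 letters of τ(x) (namely τ(x)_p ⋯ τ(x)_{p+|u|−2}) equals Σ_{a∈A} |w|_a · q_{τ,x}(u,a). -/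
open scoped Classical

section Aux
variable {A : Type*} {B : Type*}

lemma countOccs_eq_sum (v u : List A) :
    countOccs v u = ∑ i ∈ Finset.range (v.length + 1), if u <+: v.drop i then 1 else 0 :=
  Finset.card_filter _ _

lemma countOccs_of_lt {v u : List A} (h : v.length < u.length) : countOccs v u = 0 := by
  rw [countOccs_eq_sum]
  refine Finset.sum_eq_zero fun i _ => if_neg fun hp => ?_
  have h1 := hp.length_le
  rw [List.length_drop] at h1
  omega

lemma countOccs_cons (a : A) (v u : List A) :
    countOccs (a :: v) u = (if u <+: a :: v then 1 else 0) + countOccs v u := by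
  rw [countOccs_eq_sum, countOccs_eq_sum, List.length_cons, Finset.sum_range_succ']
  simp only [List.drop_succ_cons, List.drop_zero]
  omega

lemma countOccs_append_split {v t c u : List B} (hct : c <+: t) (hc : c.length + 1 = u.length) :
    countOccs (v ++ t) u = countOccs (v ++ c) u + countOccs t u := by
  have dct : ∀ d : List B, d ++ c <+: d ++ t := by
    intro d; obtain ⟨s, rfl⟩ := hct; exact ⟨s, by simp⟩
  have key : ∀ i ∈ Finset.range v.length,
      (if u <+: (v ++ t).drop i then 1 else 0) = (if u <+: (v ++ c).drop i then 1 else 0) := by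
    intro i hi
    rw [Finset.mem_range] at hi
    rw [List.drop_append_of_le_length hi.le, List.drop_append_of_le_length hi.le]
    congr 1
    refine propext ⟨fun h => ?_, fun h => h.trans (dct _)⟩
    refine List.prefix_of_prefix_length_le h (dct _) ?_
    have : 1 ≤ (v.drop i).length := by rw [List.length_drop]; omega
    simp only [List.length_append]
    omega
  rw [countOccs_eq_sum, countOccs_eq_sum, countOccs_eq_sum]
  have h1 : (v ++ t).length + 1 = v.length + (t.length + 1) := by simp; omega
  have h2 : (v ++ c).length + 1 = v.length + (c.length + 1) := by simp; omega
  rw [h1, h2,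
    Finset.sum_range_add (fun i => if u <+: (v ++ t).drop i then 1 else 0) v.length
      (t.length + 1),
    Finset.sum_range_add (fun i => if u <+: (v ++ c).drop i then 1 else 0) v.length
      (c.length + 1),
    Finset.sum_congr rfl key]
  have e2 : ∀ i, (v ++ t).drop (v.length + i) = t.drop i := fun i => List.drop_length_add_append i
  have e3 : ∀ i, (v ++ c).drop (v.length + i) = c.drop i := fun i => List.drop_length_add_append i
  simp only [e2, e3]
  have z : ∑ i ∈ Finset.range (c.length + 1), (if u <+: c.drop i then 1 else 0) = 0 := by
    refine Finset.sum_eq_zero fun i _ => if_neg fun hp => ?_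
    have h1 := hp.length_le
    rw [List.length_drop] at h1
    omega
  omega

lemma sum_map_eq [Fintype A] (w : List A) (f : A → ℕ) :
    (w.map f).sum = ∑ a : A, countOccs w [a] * f a := by
  induction w with
  | nil =>
    simp only [List.map_nil, List.sum_nil]
    refine (Finset.sum_eq_zero fun a _ => ?_).symm
    rw [countOccs_of_lt (by simp)]; ring
  | cons b w ih =>
    simp only [List.map_cons, List.sum_cons, ih, countOccs_cons, add_mul,
      Finset.sum_add_distrib]
    have : ∀ a : A, (if [a] <+: b :: w then 1 else 0) * f a = if a = b then f b else 0 := by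
      intro a
      by_cases h : a = b <;> simp [List.cons_prefix_cons, h]
    simp only [this]
    have hb : (∑ a : A, if a = b then f b else 0) = f b := by simp
    rw [hb]

lemma substWord_append (τ : A → List B) (p q : List A) :
    substWord τ (p ++ q) = substWord τ p ++ substWord τ q := by
  simp [substWord]

lemma substWord_cons (τ : A → List B) (a : A) (w : List A) :
    substWord τ (a :: w) = τ a ++ substWord τ w := by
  simp [substWord]

lemma substWord_singleton (τ : A → List B) (a : A) : substWord τ [a] = τ a := by
  simp [substWord]

lemma wordPrefix_succ (x : ℕ → A) (n : ℕ) :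
    wordPrefix x (n + 1) = wordPrefix x n ++ [x n] := by
  simp [wordPrefix, List.range_succ]

lemma wordPrefix_prefix (x : ℕ → A) {m n : ℕ} (h : m ≤ n) :
    wordPrefix x m <+: wordPrefix x n := by
  have : wordPrefix x m = (wordPrefix x n).take m := by
    simp [wordPrefix, ← List.map_take, List.take_range, Nat.min_eq_left h]
  rw [this]
  exact List.take_prefix _ _

lemma substWord_prefix (τ : A → List B) {p q : List A} (h : p <+: q) :
    substWord τ p <+: substWord τ q := by
  obtain ⟨s, rfl⟩ := h
  rw [substWord_append]
  exact List.prefix_append _ _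

lemma substInf_eq_getElem [Nonempty B] (τ : A → List B) (x : ℕ → A) {n j : ℕ}
    (hj : j < (substWord τ (wordPrefix x n)).length) :
    substInf τ x j = (substWord τ (wordPrefix x n))[j] := by
  have h : ∃ m, j < (substWord τ (wordPrefix x m)).length := ⟨n, hj⟩
  rw [substInf, dif_pos h]
  have hle : Nat.find h ≤ n := Nat.find_le hj
  have hpre : substWord τ (wordPrefix x (Nat.find h)) <+: substWord τ (wordPrefix x n) :=
    substWord_prefix τ (wordPrefix_prefix x hle)
  simpa using hpre.getElem (Nat.find_spec h)

lemma pair_occurs (x : ℕ → A) (m : ℕ) : IsFactor x [x m, x (m + 1)] :=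
  ⟨m, by simp [OccursAt, List.range_succ]⟩

lemma tail_eq [Nonempty B] {τ : A → List B} {x : ℕ → A} {r : A → List B} {k : ℕ}
    (hdec : DecisiveWith τ x r k) (m c : ℕ) (hc : c ≤ k) :
    ((List.range c).map fun j =>
        substInf τ x ((substWord τ (wordPrefix x (m + 1))).length + j))
      = (r (x m)).take c := by
  obtain ⟨hk, hr, hrt⟩ := hdec
  have hpre : r (x m) <+: τ (x (m + 1)) := hrt _ _ (pair_occurs x m)
  have hlen : k ≤ (τ (x (m + 1))).length := hr (x m) ▸ hpre.length_le
  have e : substWord τ (wordPrefix x (m + 2)) =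
      substWord τ (wordPrefix x (m + 1)) ++ τ (x (m + 1)) := by
    rw [show m + 2 = (m + 1) + 1 from rfl, wordPrefix_succ, substWord_append,
      substWord_singleton]
  apply List.ext_getElem
  · simp [hr, Nat.min_eq_left hc]
  intro j h1 h2
  have hj : j < c := by simpa using h1
  have hfull : (substWord τ (wordPrefix x (m + 1))).length + j
      < (substWord τ (wordPrefix x (m + 2))).length := by
    rw [e, List.length_append]; omega
  simp only [List.getElem_map, List.getElem_range, List.getElem_take]
  rw [substInf_eq_getElem τ x hfull]
  have hjr : j < (r (x m)).length := by rw [hr]; omega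
  have hjB : j < (τ (x (m + 1))).length := by omega
  rw [List.getElem_of_eq e hfull, List.getElem_append_right (by omega)]
  simp only [Nat.add_sub_cancel_left]
  exact (hpre.getElem hjr).symm
end Aux

section Main
variable {A : Type*} {B : Type*}

lemma occursAt_cons {x : ℕ → A} {a : A} {w : List A} {i : ℕ} (h : OccursAt x (a :: w) i) :
    a = x i ∧ OccursAt x w (i + 1) := by
  rw [OccursAt, List.length_cons, List.range_succ_eq_map, List.map_cons, List.map_map] at h
  obtain ⟨ha, hw⟩ := List.cons_eq_cons.mp h
  refine ⟨by simpa using ha, ?_⟩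
  have heq : List.map ((fun j => x (i + j)) ∘ Nat.succ) (List.range w.length)
      = List.map (fun j => x (i + 1 + j)) (List.range w.length) :=
    List.map_congr_left fun j _ => by
      simp only [Function.comp_apply]
      congr 1
      omega
  rw [OccursAt]
  exact hw.trans heq

lemma occ_formula [Nonempty B] {τ : A → List B} {x : ℕ → A} {r : A → List B} {k : ℕ}
    (hdec : DecisiveWith τ x r k) (u : List B) (hu1 : 1 ≤ u.length) (huk : u.length ≤ k + 1) :
    ∀ (w : List A) (i : ℕ), OccursAt x w i →
      countOccs (substWord τ w ++ ((List.range (u.length - 1)).map fun j =>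
          substInf τ x ((substWord τ (wordPrefix x (i + w.length))).length + j))) u
        = (w.map fun a => countOccs (τ a ++ (r a).take (u.length - 1)) u).sum := by
  intro w
  induction w with
  | nil =>
    intro i _
    simp only [List.map_nil, List.sum_nil]
    rw [show substWord τ ([] : List A) = [] from rfl, List.nil_append]
    apply countOccs_of_lt
    rw [List.length_map, List.length_range]
    omega
  | cons a w ih =>
    intro i hocc
    obtain ⟨ha, hocc'⟩ := occursAt_cons hocc
    have hidx : i + (a :: w).length = (i + 1) + w.length := by
      rw [List.length_cons]; omega
    rw [hidx, substWord_cons, List.append_assoc]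
    have hclen : ((r a).take (u.length - 1)).length + 1 = u.length := by
      rw [List.length_take, hdec.2.1 a]
      omega
    have hct : (r a).take (u.length - 1) <+:
        substWord τ w ++ ((List.range (u.length - 1)).map fun j =>
          substInf τ x ((substWord τ (wordPrefix x ((i + 1) + w.length))).length + j)) := by
      cases w with
      | nil =>
        rw [show substWord τ ([] : List A) = [] from rfl, List.nil_append,
          List.length_nil, Nat.add_zero, tail_eq hdec i (u.length - 1) (by omega), ← ha]
      | cons b w' =>
        obtain ⟨hb, _⟩ := occursAt_cons hocc'
        have h1 : (r a).take (u.length - 1) <+: r a := List.take_prefix _ _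
        have h2 : r a <+: τ b := by
          rw [ha, hb]
          exact hdec.2.2 _ _ (pair_occurs x i)
        refine (h1.trans h2).trans ?_
        rw [substWord_cons, List.append_assoc]
        exact List.prefix_append _ _
    rw [countOccs_append_split hct hclen, ih (i + 1) hocc']
    rw [List.map_cons, List.sum_cons]
end Main

/-- Proposition (occurrence formula for decisive substitutions): if `τ` is `k`-decisive
in `x` with map `r`, `w` occurs at position `i` of `x` and
`p = |τ(x₀ ⋯ x_{i+|w|−1})|`, then for every factor `u` of `τ(x)` with `1 ≤ |u| ≤ k+1`,
`|τ(w) · τ(x)_{[p, p+|u|−1)}|_u = Σ_a |w|_a · q_{τ,x}(u,a)`,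
where `q_{τ,x}(u,a) = |τ(a) · r_{|u|}(a)|_u`. -/
theorem stmt13 {A B : Type*} [Fintype A] [Nonempty B] (τ : A → List B) (x : ℕ → A)
    (k : ℕ) (r : A → List B) (hdec : DecisiveWith τ x r k)
    (w : List A) (i : ℕ) (hocc : OccursAt x w i)
    (u : List B) (hufac : IsFactor (substInf τ x) u)
    (hu1 : 1 ≤ u.length) (huk : u.length ≤ k + 1) :
    countOccs
        (substWord τ w ++ (List.range (u.length - 1)).map fun j =>
          substInf τ x ((substWord τ (wordPrefix x (i + w.length))).length + j)) u
      = ∑ a : A, countOccs w [a] * countOccs (τ a ++ (r a).take (u.length - 1)) u := by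
  rw [occ_formula hdec u hu1 huk w i hocc]
  exact sum_map_eq w _
end

section
/- Let A be a finite alphabet with at least 2 letters and let (c_n)_{n≥0} be a sequence over A such that, for some C ∈ ℕ, (c_n) contains no C+1 consecutive equal letters (bounded weak partial coefficients). Let τ_n = σ_{c_n} be the corresponding Arnoux–Rauzy substitutions and τ_{0,n} = τ_0 ∘ τ_1 ∘ ⋯ ∘ τ_{n−1}. Then there exists M > 0 such that |τ_{0,n}(a)| ≤ M·|τ_{0,n}(b)| for all n ≥ 1 and all a, b ∈ A. -/
open scoped Classical

section ArnouxRauzy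

variable {A : Type*}

/-- The Arnoux–Rauzy substitution `σ_a`: it maps `a` to `a` and any `b ≠ a` to `ba`. -/
def arSubst [DecidableEq A] (a b : A) : List A := if b = a then [a] else [b, a]

/-- `arIter c n = σ_{c 0} ∘ σ_{c 1} ∘ ⋯ ∘ σ_{c (n-1)}` (identity for `n = 0`). -/
def arIter [DecidableEq A] (c : ℕ → A) : ℕ → A → List A
  | 0, b => [b]
  | n+1, b => substWord (arIter c n) (arSubst (c n) b)

/-- The Arnoux–Rauzy word associated with the directive sequence `c` and letter `a`:
the limit of the prefix chain `σ_{c 0} ∘ ⋯ ∘ σ_{c n}(a)`. -/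
noncomputable def arLimit [DecidableEq A] (c : ℕ → A) (a : A) (j : ℕ) : A :=
  if h : ∃ n, j < (arIter c n a).length
  then (arIter c (Nat.find h) a).get ⟨j, Nat.find_spec h⟩
  else a

end ArnouxRauzy

/-!
Write `L n b = |τ_{0,n}(b)|` and `s n = L n (c n)`. Since `τ_{0,n+1}(b) = τ_{0,n}(b) τ_{0,n}(c n)`
for `b ≠ c n` and `τ_{0,n+1}(c n) = τ_{0,n}(c n)`, we get `s n ≤ L (n+1) b ≤ L n b + s n`: the
letter `c n` is the shortest at level `n + 1`, and `s` is monotone. Whenever the directive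
sequence changes, `c (n+2) ≠ c (n+1)`, the pivot length grows like Fibonacci numbers,
`s n + s (n+1) ≤ s (n+2)`, and a change occurs among any `C + 1` consecutive terms, so
`2 s t ≤ s (t + C + 1)`. Applying `L (n+1) a ≤ L m a + (n + 1 - m) s n` window by window gives
`L (n+1) a ≤ (2C + 2) s n ≤ (2C + 2) L (n+1) b`.
-/

theorem exists_apply_succ_ne_of_not_forall_apply_add_eq {α : Type*} {f : ℕ → α} {n C : ℕ}
    (h : ¬ ∀ j, j ≤ C → f (n + j) = f n) : ∃ u, n ≤ u ∧ u < n + C ∧ f (u + 1) ≠ f u := by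
  by_contra! hconst
  refine h fun j hj => ?_
  induction j with
  | zero => rfl
  | succ j ih => rw [← add_assoc, hconst (n + j) (by omega) (by omega), ih (by omega)]

section ArnouxRauzyLength

variable {A : Type*} [DecidableEq A] (c : ℕ → A)

theorem length_arIter_succ (n : ℕ) (b : A) :
    (arIter c (n + 1) b).length =
      if b = c n then (arIter c n (c n)).length
      else (arIter c n b).length + (arIter c n (c n)).length := by
  by_cases h : b = c n <;> simp [arIter, substWord, arSubst, h]

theorem one_le_length_arIter (n : ℕ) (b : A) : 1 ≤ (arIter c n b).length := by
  induction n generalizing b with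
  | zero => simp [arIter]
  | succ n ih =>
    rw [length_arIter_succ]
    split
    · exact ih _
    · exact (ih b).trans (Nat.le_add_right _ _)

theorem length_arIter_self_le_length_arIter_succ (n : ℕ) (b : A) :
    (arIter c n (c n)).length ≤ (arIter c (n + 1) b).length := by
  rw [length_arIter_succ]
  split <;> omega

theorem length_arIter_succ_le (n : ℕ) (b : A) :
    (arIter c (n + 1) b).length ≤ (arIter c n b).length + (arIter c n (c n)).length := by
  rw [length_arIter_succ]
  split <;> omega

theorem monotone_length_arIter_self : Monotone fun n => (arIter c n (c n)).length :=
  monotone_nat_of_le_succ fun n => length_arIter_self_le_length_arIter_succ c n (c (n + 1))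

theorem length_arIter_self_add_le_of_ne {n : ℕ} (h : c (n + 2) ≠ c (n + 1)) :
    (arIter c n (c n)).length + (arIter c (n + 1) (c (n + 1))).length ≤
      (arIter c (n + 2) (c (n + 2))).length := by
  rw [length_arIter_succ c (n + 1) (c (n + 2)), if_neg h]
  have := length_arIter_self_le_length_arIter_succ c n (c (n + 2))
  omega

theorem two_mul_length_arIter_self_le {C t : ℕ}
    (hC : ¬ ∀ j, j ≤ C → c (t + 1 + j) = c (t + 1)) :
    2 * (arIter c t (c t)).length ≤ (arIter c (t + C + 1) (c (t + C + 1))).length := by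
  obtain ⟨u, htu, huC, hne⟩ := exists_apply_succ_ne_of_not_forall_apply_add_eq hC
  obtain ⟨v, rfl⟩ : ∃ v, u = v + 1 := ⟨u - 1, by omega⟩
  have hmono := monotone_length_arIter_self c
  calc 2 * (arIter c t (c t)).length
      ≤ (arIter c v (c v)).length + (arIter c (v + 1) (c (v + 1))).length := by
        have h₁ : (arIter c t (c t)).length ≤ (arIter c v (c v)).length := hmono (by omega)
        have h₂ : (arIter c t (c t)).length ≤ (arIter c (v + 1) (c (v + 1))).length :=
          hmono (by omega)
        omega
    _ ≤ (arIter c (v + 2) (c (v + 2))).length := length_arIter_self_add_le_of_ne c hne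
    _ ≤ _ := hmono (show v + 2 ≤ t + C + 1 by omega)

theorem length_arIter_succ_le_add_mul {m n : ℕ} (hmn : m ≤ n) (a : A) :
    (arIter c (n + 1) a).length ≤
      (arIter c m a).length + (n + 1 - m) * (arIter c n (c n)).length := by
  induction n, hmn using Nat.le_induction with
  | base => simpa using length_arIter_succ_le c m a
  | succ n hmn ih =>
    have hstep := length_arIter_succ_le c (n + 1) a
    have hmono : (arIter c n (c n)).length ≤ (arIter c (n + 1) (c (n + 1))).length :=
      monotone_length_arIter_self c (Nat.le_succ n)
    calc (arIter c (n + 1 + 1) a).length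
        ≤ (arIter c m a).length + (n + 1 - m) * (arIter c n (c n)).length
            + (arIter c (n + 1) (c (n + 1))).length := by omega
      _ ≤ (arIter c m a).length + (n + 1 - m) * (arIter c (n + 1) (c (n + 1))).length
            + (arIter c (n + 1) (c (n + 1))).length := by gcongr
      _ = (arIter c m a).length + (n + 1 + 1 - m) * (arIter c (n + 1) (c (n + 1))).length := by
        rw [show n + 1 + 1 - m = (n + 1 - m) + 1 by omega]
        ring

theorem length_arIter_succ_le_mul_length_arIter_self {C : ℕ}
    (hC : ∀ n : ℕ, ¬ ∀ j : ℕ, j ≤ C → c (n + j) = c n) (n : ℕ) (a : A) :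
    (arIter c (n + 1) a).length ≤ (2 * C + 2) * (arIter c n (c n)).length := by
  induction n using Nat.strong_induction_on generalizing a with
  | _ n ih =>
    have hpos := one_le_length_arIter c n (c n)
    rcases le_or_gt n C with hn | hn
    · have := length_arIter_succ_le_add_mul c (Nat.zero_le n) a
      rw [show (arIter c 0 a).length = 1 from rfl, Nat.sub_zero] at this
      nlinarith
    · obtain ⟨m, rfl⟩ : ∃ m, n = m + C + 1 := ⟨n - (C + 1), by omega⟩
      have hwindow := length_arIter_succ_le_add_mul c (show m + 1 ≤ m + C + 1 by omega) a
      have hprev := ih m (by omega) a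
      have hdouble := two_mul_length_arIter_self_le c (hC (m + 1))
      rw [show m + C + 1 + 1 - (m + 1) = C + 1 by omega] at hwindow
      nlinarith

end ArnouxRauzyLength

theorem stmt16_general {A : Type*} [DecidableEq A]
    (c : ℕ → A) (C : ℕ) (hC : ∀ n : ℕ, ¬ (∀ j : ℕ, j ≤ C → c (n + j) = c n)) :
    ∃ M : ℝ, 0 < M ∧ ∀ n : ℕ, 1 ≤ n → ∀ a b : A,
      ((arIter c n a).length : ℝ) ≤ M * ((arIter c n b).length : ℝ) := by
  refine ⟨2 * C + 2, by positivity, fun n hn a b => ?_⟩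
  obtain ⟨k, rfl⟩ : ∃ k, n = k + 1 := ⟨n - 1, by omega⟩
  have hnat : (arIter c (k + 1) a).length ≤ (2 * C + 2) * (arIter c (k + 1) b).length :=
    (length_arIter_succ_le_mul_length_arIter_self c hC k a).trans
      (Nat.mul_le_mul_left _ (length_arIter_self_le_length_arIter_succ c k b))
  exact_mod_cast hnat

/-- Lemma: for a sequence of Arnoux–Rauzy substitutions with bounded weak partial
quotients, the ratios `|τ_{0,n}(a)| / |τ_{0,n}(b)|` are uniformly bounded. -/
theorem stmt16 {A : Type*} [Fintype A] [DecidableEq A] (hcard : 2 ≤ Fintype.card A)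
    (c : ℕ → A) (C : ℕ) (hC : ∀ n : ℕ, ¬ (∀ j : ℕ, j ≤ C → c (n + j) = c n)) :
    ∃ M : ℝ, 0 < M ∧ ∀ n : ℕ, 1 ≤ n → ∀ a b : A,
      ((arIter c n a).length : ℝ) ≤ M * ((arIter c n b).length : ℝ) :=
  stmt16_general c C hC
end
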